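/- arXiv:2412.04401 — 12 statements merged into one kernel-verified Lean document; each statement's English description precedes it below -/
import Mathlib

section
/- Let K be a compact Hausdorff space which is Gruenhage (equivalently, which admits a σ-distributively point-finite separating cover by open sets). Then K has a dense G_δ subset which is metrizable in the subspace topology. -/
/-!
Each `𝒰 n` of a Gruenhage sequence yields pairwise disjoint open families: for a `k`-element
`F ⊆ 𝒰 n`, the stratum of points lying in every member of `F` but away from the closure of the
other members. Off the nowhere dense frontiers of the open sets of points lying in at least `k`
members of `𝒰 n`, a point of finite order lies in the stratum of the members containing it, so the
strata separate points. Follow each family by an endless chain of disjoint open families, each with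
dense union and with closures of members inside the union of its predecessor (regularity and Zorn);
the points lying in a member of every family form a dense `Gδ` set `S` (Baire). Sending a point of
`S` to the members containing it embeds `S` into a countable product of discrete spaces:
injectivity is the separation, and by compactness the closure condition makes the cylinders
neighbourhood bases.
-/

/-- A topological space is *Gruenhage* if there is a sequence `(𝒰 n)` of families of open
sets such that for all distinct `x, y` there is `n` with (i) some `U ∈ 𝒰 n` containing
exactly one of `x, y`, and (ii) `{U ∈ 𝒰 n | x ∈ U}` finite or `{U ∈ 𝒰 n | y ∈ U}` finite. -/
def IsGruenhage (X : Type*) [TopologicalSpace X] : Prop :=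
  ∃ 𝒰 : ℕ → Set (Set X),
    (∀ n, ∀ U ∈ 𝒰 n, IsOpen U) ∧
    ∀ x y : X, x ≠ y →
      ∃ n, (∃ U ∈ 𝒰 n, Xor' (x ∈ U) (y ∈ U)) ∧
        ({U ∈ 𝒰 n | x ∈ U}.Finite ∨ {U ∈ 𝒰 n | y ∈ U}.Finite)

section

open Set Function Topology Filter TopologicalSpace

variable {X : Type*} [TopologicalSpace X]

theorem Set.PairwiseDisjoint.sep_mem_eq_singleton {α : Type*} {𝒜 : Set (Set α)}
    (h : 𝒜.PairwiseDisjoint id) {A : Set α} (hA : A ∈ 𝒜) {x : α} (hx : x ∈ A) :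
    {B ∈ 𝒜 | x ∈ B} = {A} := by
  ext B
  exact ⟨fun ⟨hB, hxB⟩ => h.elim hB hA (not_disjoint_iff.2 ⟨x, hxB, hx⟩),
    by rintro rfl; exact ⟨hA, hx⟩⟩

structure IsDenseCellular (𝒜 : Set (Set X)) : Prop where
  isOpen : ∀ A ∈ 𝒜, IsOpen A
  pairwiseDisjoint : 𝒜.PairwiseDisjoint id
  dense : Dense (⋃₀ 𝒜)

theorem isDenseCellular_insert_compl_closure {𝒜 : Set (Set X)} (hopen : ∀ A ∈ 𝒜, IsOpen A)
    (hdisj : 𝒜.PairwiseDisjoint id) : IsDenseCellular (insert (closure (⋃₀ 𝒜))ᶜ 𝒜) where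
  isOpen := by
    rintro A (rfl | hA)
    exacts [isClosed_closure.isOpen_compl, hopen A hA]
  pairwiseDisjoint := hdisj.insert fun A hA _ =>
    disjoint_compl_left.mono_right ((subset_sUnion_of_mem hA).trans subset_closure)
  dense := by
    rw [sUnion_insert, dense_iff_closure_eq, eq_univ_iff_forall]
    intro x
    by_cases hx : x ∈ closure (⋃₀ 𝒜)
    exacts [closure_mono subset_union_right hx, subset_closure (Or.inl hx)]

theorem isDenseCellular_singleton {U : Set X} (hU : IsOpen U) (hd : Dense U) :
    IsDenseCellular {U} :=
  ⟨by simpa using hU, pairwiseDisjoint_singleton _ _, by simpa using hd⟩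

theorem exists_pairwiseDisjoint_closure_subset [RegularSpace X] {U : Set X} (hU : IsOpen U) :
    ∃ 𝒲 : Set (Set X), (∀ W ∈ 𝒲, IsOpen W ∧ closure W ⊆ U) ∧ 𝒲.PairwiseDisjoint id ∧
      U ⊆ closure (⋃₀ 𝒲) := by
  obtain ⟨𝒲, h𝒲⟩ := zorn_subset
    {𝒲 : Set (Set X) | (∀ W ∈ 𝒲, IsOpen W ∧ closure W ⊆ U) ∧ 𝒲.PairwiseDisjoint id}
    fun c hc hchain => ⟨⋃₀ c, ⟨fun W ⟨𝒱, h𝒱, hW⟩ => (hc h𝒱).1 W hW,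
      (hchain.pairwiseDisjoint_sUnion id).2 fun 𝒱 h𝒱 => (hc h𝒱).2⟩,
      fun _ h𝒱 => subset_sUnion_of_mem h𝒱⟩
  obtain ⟨hgood, hdisj⟩ := h𝒲.prop
  refine ⟨𝒲, hgood, hdisj, fun x hxU => by_contra fun hx => ?_⟩
  obtain ⟨V, ⟨hxV, hV⟩, hVsub⟩ := (hasBasis_opens_closure x).mem_iff.1
    ((hU.sdiff isClosed_closure).mem_nhds ⟨hxU, hx⟩)
  have hV𝒲 : ∀ W ∈ 𝒲, Disjoint V W := fun W hW =>
    disjoint_left.2 fun y hyV hyW => (hVsub (subset_closure hyV)).2 (subset_closure ⟨W, hW, hyW⟩)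
  have : V ∈ 𝒲 := h𝒲.mem_of_prop_insert
    ⟨fun W => by
      rintro (rfl | hW)
      exacts [⟨hV, hVsub.trans sdiff_subset⟩, hgood W hW],
      hdisj.insert fun W hW _ => hV𝒲 W hW⟩
  exact hx (subset_closure ⟨V, this, hxV⟩)

theorem IsDenseCellular.exists_closure_subset_sUnion [RegularSpace X] {𝒜 : Set (Set X)}
    (h : IsDenseCellular 𝒜) : ∃ 𝒲, IsDenseCellular 𝒲 ∧ ∀ W ∈ 𝒲, closure W ⊆ ⋃₀ 𝒜 := by
  obtain ⟨𝒲, h𝒲, hdisj, hsub⟩ := exists_pairwiseDisjoint_closure_subset (isOpen_sUnion h.isOpen)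
  exact ⟨𝒲, ⟨fun W hW => (h𝒲 W hW).1, hdisj, dense_closure.1 (h.dense.mono hsub)⟩,
    fun W hW => (h𝒲 W hW).2⟩

theorem exists_isDenseCellular_seq_closure_subset [RegularSpace X] {ι : Type*}
    {c : ι → Set (Set X)} (hc : ∀ t, IsDenseCellular (c t)) :
    ∃ 𝒜 : ι × ℕ → Set (Set X), (∀ j, IsDenseCellular (𝒜 j)) ∧ (∀ t, 𝒜 (t, 0) = c t) ∧
      ∀ j, ∃ j', ∀ A ∈ 𝒜 j', closure A ⊆ ⋃₀ 𝒜 j := by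
  choose! r hr hrsub using fun (𝒜 : Set (Set X)) (h : IsDenseCellular 𝒜) =>
    h.exists_closure_subset_sUnion
  have hiter : ∀ t n, IsDenseCellular (r^[n] (c t)) := fun t n => by
    induction n with
    | zero => exact hc t
    | succ n ih => rw [iterate_succ_apply']; exact hr _ ih
  refine ⟨fun j => r^[j.2] (c j.1), fun j => hiter j.1 j.2, fun t => rfl, fun j => ?_⟩
  exact ⟨(j.1, j.2 + 1), by simpa only [iterate_succ_apply'] using hrsub _ (hiter j.1 j.2)⟩

section Strata

variable (𝒰 : Set (Set X))

def coveredAtLeast (k : ℕ) : Set X :=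
  {x | ∃ F ⊆ 𝒰, F.Finite ∧ F.ncard = k ∧ x ∈ ⋂₀ F}

def stratum (F : Set (Set X)) : Set X :=
  ⋂₀ F \ closure (⋃₀ (𝒰 \ F))

def strata (k : ℕ) : Set (Set X) :=
  stratum 𝒰 '' {F | F ⊆ 𝒰 ∧ F.Finite ∧ F.ncard = k}

variable {𝒰}

theorem isOpen_coveredAtLeast (h𝒰 : ∀ U ∈ 𝒰, IsOpen U) (k : ℕ) :
    IsOpen (coveredAtLeast 𝒰 k) := by
  rw [isOpen_iff_forall_mem_open]
  rintro x ⟨F, hF𝒰, hF, hFk, hxF⟩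
  exact ⟨⋂₀ F, fun y hy => ⟨F, hF𝒰, hF, hFk, hy⟩,
    hF.isOpen_sInter fun U hU => h𝒰 U (hF𝒰 hU), hxF⟩

theorem isOpen_of_mem_strata (h𝒰 : ∀ U ∈ 𝒰, IsOpen U) {k : ℕ} {T : Set X}
    (hT : T ∈ strata 𝒰 k) : IsOpen T := by
  obtain ⟨F, ⟨hF𝒰, hF, -⟩, rfl⟩ := hT
  exact (hF.isOpen_sInter fun U hU => h𝒰 U (hF𝒰 hU)).sdiff isClosed_closure

theorem pairwiseDisjoint_strata (k : ℕ) : (strata 𝒰 k).PairwiseDisjoint id := by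
  rintro _ ⟨F, ⟨-, hF, hFk⟩, rfl⟩ _ ⟨F', ⟨hF'𝒰, -, hF'k⟩, rfl⟩ hne
  obtain ⟨U, hUF', hUF⟩ := not_subset.1 fun h =>
    hne (congrArg (stratum 𝒰) (eq_of_subset_of_ncard_le h (by omega) hF).symm)
  exact disjoint_left.2 fun x hx hx' => hx.2 (subset_closure ⟨U, ⟨hF'𝒰 hUF', hUF⟩, hx'.1 U hUF'⟩)

theorem mem_iff_of_mem_stratum {p q : X} {U : Set X} (hU : U ∈ 𝒰)
    (hq : q ∈ stratum 𝒰 {U ∈ 𝒰 | p ∈ U}) : p ∈ U ↔ q ∈ U :=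
  ⟨fun hp => hq.1 U ⟨hU, hp⟩,
    fun hqU => by_contra fun hp => hq.2 (subset_closure ⟨U, ⟨hU, fun h => hp h.2⟩, hqU⟩)⟩

theorem mem_stratum_of_notMem_frontier (h𝒰 : ∀ U ∈ 𝒰, IsOpen U) {p : X}
    (hfin : {U ∈ 𝒰 | p ∈ U}.Finite)
    (hp : p ∉ frontier (coveredAtLeast 𝒰 ({U ∈ 𝒰 | p ∈ U}.ncard + 1))) :
    p ∈ stratum 𝒰 {U ∈ 𝒰 | p ∈ U} := by
  set F := {U ∈ 𝒰 | p ∈ U}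
  have hpF : p ∈ ⋂₀ F := fun U hU => hU.2
  have hpE : p ∉ coveredAtLeast 𝒰 (F.ncard + 1) := fun ⟨F', hF'𝒰, _, hF'k, hpF'⟩ => by
    have : F'.ncard ≤ F.ncard := ncard_le_ncard (fun U hU => ⟨hF'𝒰 hU, hpF' U hU⟩) hfin
    omega
  rw [(isOpen_coveredAtLeast h𝒰 _).frontier_eq] at hp
  refine ⟨hpF, fun hcl => ?_⟩
  -- near `p`, a point of a member outside `F` would lie in `F.ncard + 1` members
  obtain ⟨w, ⟨hwF, hwE⟩, U, ⟨hU𝒰, hUF⟩, hwU⟩ := mem_closure_iff.1 hcl _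
    ((hfin.isOpen_sInter fun U hU => h𝒰 U hU.1).inter isClosed_closure.isOpen_compl)
    ⟨hpF, fun h => hp ⟨h, hpE⟩⟩
  refine hwE (subset_closure ⟨insert U F, insert_subset hU𝒰 (sep_subset _ _), hfin.insert U,
    ncard_insert_of_notMem hUF hfin, ?_⟩)
  rw [sInter_insert]
  exact ⟨hwU, hwF⟩

theorem mem_iff_of_forall_mem_strata_iff (h𝒰 : ∀ U ∈ 𝒰, IsOpen U) {x y : X}
    (hx : ∀ k, x ∉ frontier (coveredAtLeast 𝒰 k)) (hy : ∀ k, y ∉ frontier (coveredAtLeast 𝒰 k))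
    (hfin : {U ∈ 𝒰 | x ∈ U}.Finite ∨ {U ∈ 𝒰 | y ∈ U}.Finite)
    (hxy : ∀ k, ∀ T ∈ strata 𝒰 k, x ∈ T ↔ y ∈ T) {U : Set X} (hU : U ∈ 𝒰) :
    x ∈ U ↔ y ∈ U := by
  rcases hfin with hfin | hfin
  · exact mem_iff_of_mem_stratum hU ((hxy _ _ ⟨_, ⟨sep_subset _ _, hfin, rfl⟩, rfl⟩).1
      (mem_stratum_of_notMem_frontier h𝒰 hfin (hx _)))
  · exact (mem_iff_of_mem_stratum hU ((hxy _ _ ⟨_, ⟨sep_subset _ _, hfin, rfl⟩, rfl⟩).2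
      (mem_stratum_of_notMem_frontier h𝒰 hfin (hy _)))).symm

end Strata

theorem IsOpen.dense_compl_frontier {E : Set X} (hE : IsOpen E) : Dense (frontier E)ᶜ := by
  rw [← interior_eq_empty_iff_dense_compl, ← frontier_compl]
  exact interior_frontier hE.isClosed_compl

theorem IsGruenhage.exists_isDenseCellular_separating (h : IsGruenhage X) :
    ∃ c : ℕ × ℕ ⊕ ℕ × ℕ → Set (Set X), (∀ t, IsDenseCellular (c t)) ∧
      ∀ x ∈ ⋂ t, ⋃₀ c t, ∀ y ∈ ⋂ t, ⋃₀ c t, (∀ t, ∀ A ∈ c t, x ∈ A ↔ y ∈ A) → x = y := by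
  obtain ⟨𝒰, h𝒰, hsep⟩ := h
  let c : ℕ × ℕ ⊕ ℕ × ℕ → Set (Set X) :=
    Sum.elim (fun p => insert (closure (⋃₀ strata (𝒰 p.1) p.2))ᶜ (strata (𝒰 p.1) p.2))
      (fun p => {(frontier (coveredAtLeast (𝒰 p.1) p.2))ᶜ})
  refine ⟨c, ?_, ?_⟩
  · rintro (⟨n, k⟩ | ⟨n, k⟩)
    · exact isDenseCellular_insert_compl_closure (fun _ => isOpen_of_mem_strata (h𝒰 n))
        (pairwiseDisjoint_strata k)
    · exact isDenseCellular_singleton isClosed_frontier.isOpen_compl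
        (isOpen_coveredAtLeast (h𝒰 n) k).dense_compl_frontier
  intro x hx y hy hxy
  have hfrontier : ∀ z ∈ ⋂ t, ⋃₀ c t, ∀ n k, z ∉ frontier (coveredAtLeast (𝒰 n) k) :=
    fun z hz n k => by simpa [c] using mem_iInter.1 hz (Sum.inr (n, k))
  by_contra hne
  obtain ⟨n, ⟨U, hU, hxor⟩, hfin⟩ := hsep x y hne
  have := mem_iff_of_forall_mem_strata_iff (h𝒰 n) (hfrontier x hx n) (hfrontier y hy n) hfin
    (fun k T hT => hxy (Sum.inl (n, k)) T (mem_insert_of_mem _ hT)) hU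
  rcases hxor with ⟨hxU, hyU⟩ | ⟨hyU, hxU⟩
  exacts [hyU (this.1 hxU), hxU (this.2 hyU)]

section Metrizable

variable {ι : Type*} {𝒜 : ι → Set (Set X)}

theorem eq_of_forall_mem_closure (hopen : ∀ i, ∀ A ∈ 𝒜 i, IsOpen A)
    (hdisj : ∀ i, (𝒜 i).PairwiseDisjoint id)
    (hreg : ∀ i, ∃ i', ∀ A ∈ 𝒜 i', closure A ⊆ ⋃₀ 𝒜 i)
    (hsep : ∀ x ∈ ⋂ i, ⋃₀ 𝒜 i, ∀ y ∈ ⋂ i, ⋃₀ 𝒜 i, (∀ i, ∀ A ∈ 𝒜 i, x ∈ A ↔ y ∈ A) → x = y)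
    {x z : X} (hx : x ∈ ⋂ i, ⋃₀ 𝒜 i) (hz : ∀ i, ∀ A ∈ 𝒜 i, x ∈ A → z ∈ closure A) : z = x := by
  have hzS : z ∈ ⋂ i, ⋃₀ 𝒜 i := mem_iInter.2 fun i => by
    obtain ⟨i', hi'⟩ := hreg i
    obtain ⟨A, hA, hxA⟩ := mem_iInter.1 hx i'
    exact hi' A hA (hz i' A hA hxA)
  -- the member containing `z` is open and meets the member containing `x`
  have hcell : ∀ i, ∀ A ∈ 𝒜 i, x ∈ A → z ∈ A := fun i A hA hxA => by
    obtain ⟨B, hB, hzB⟩ := mem_iInter.1 hzS i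
    obtain ⟨w, hwB, hwA⟩ := mem_closure_iff.1 (hz i A hA hxA) B (hopen i B hB) hzB
    rwa [(hdisj i).elim hA hB (not_disjoint_iff.2 ⟨w, hwA, hwB⟩)]
  refine (hsep x hx z hzS fun i A hA => ⟨hcell i A hA, fun hzA => ?_⟩).symm
  obtain ⟨B, hB, hxB⟩ := mem_iInter.1 hx i
  rwa [(hdisj i).elim hA hB (not_disjoint_iff.2 ⟨z, hzA, hcell i B hB hxB⟩)]

theorem exists_finset_sep_eq_subset_of_mem_nhds [CompactSpace X]
    (hopen : ∀ i, ∀ A ∈ 𝒜 i, IsOpen A) (hdisj : ∀ i, (𝒜 i).PairwiseDisjoint id)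
    (hreg : ∀ i, ∃ i', ∀ A ∈ 𝒜 i', closure A ⊆ ⋃₀ 𝒜 i)
    (hsep : ∀ x ∈ ⋂ i, ⋃₀ 𝒜 i, ∀ y ∈ ⋂ i, ⋃₀ 𝒜 i, (∀ i, ∀ A ∈ 𝒜 i, x ∈ A ↔ y ∈ A) → x = y)
    {x : X} (hx : x ∈ ⋂ i, ⋃₀ 𝒜 i) {O : Set X} (hO : O ∈ 𝓝 x) :
    ∃ s : Finset ι, {y | ∀ i ∈ s, {A ∈ 𝒜 i | y ∈ A} = {A ∈ 𝒜 i | x ∈ A}} ⊆ O := by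
  classical
  let V : Finset ι → Set X := fun s => closure {y | ∀ i ∈ s, {A ∈ 𝒜 i | y ∈ A} = {A ∈ 𝒜 i | x ∈ A}}
  have hV : Directed (· ⊇ ·) V := fun s t =>
    ⟨s ∪ t, closure_mono fun y hy i hi => hy i (Finset.mem_union_left _ hi),
      closure_mono fun y hy i hi => hy i (Finset.mem_union_right _ hi)⟩
  obtain ⟨s, hs⟩ := exists_subset_nhds_of_isCompact' hV (fun _ => isClosed_closure.isCompact)
    (fun _ => isClosed_closure) fun z hz => by
      rwa [eq_of_forall_mem_closure hopen hdisj hreg hsep hx fun i A hA hxA =>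
        closure_mono (fun y hy => ?_) (mem_iInter.1 hz {i})]
      have hAy : A ∈ {A ∈ 𝒜 i | y ∈ A} := by
        rw [hy i (Finset.mem_singleton_self i)]
        exact ⟨hA, hxA⟩
      exact hAy.2
  exact ⟨s, subset_closure.trans hs⟩

theorem metrizableSpace_iInter_sUnion [CompactSpace X] [Countable ι]
    (hopen : ∀ i, ∀ A ∈ 𝒜 i, IsOpen A) (hdisj : ∀ i, (𝒜 i).PairwiseDisjoint id)
    (hreg : ∀ i, ∃ i', ∀ A ∈ 𝒜 i', closure A ⊆ ⋃₀ 𝒜 i)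
    (hsep : ∀ x ∈ ⋂ i, ⋃₀ 𝒜 i, ∀ y ∈ ⋂ i, ⋃₀ 𝒜 i, (∀ i, ∀ A ∈ 𝒜 i, x ∈ A ↔ y ∈ A) → x = y) :
    MetrizableSpace (⋂ i, ⋃₀ 𝒜 i) := by
  let _ : TopologicalSpace (Set (Set X)) := ⊥
  have : DiscreteTopology (Set (Set X)) := ⟨rfl⟩
  let f : (⋂ i, ⋃₀ 𝒜 i) → ι → Set (Set X) := fun y i => {A ∈ 𝒜 i | (y : X) ∈ A}
  have hlocal : ∀ i, ∀ y, ∀ᶠ z in 𝓝 y, f z i = f y i := fun i y => by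
    obtain ⟨A, hA, hyA⟩ := mem_iInter.1 y.2 i
    filter_upwards [continuous_subtype_val.continuousAt.preimage_mem_nhds
      ((hopen i A hA).mem_nhds hyA)] with z hzA
    simp only [f, (hdisj i).sep_mem_eq_singleton hA hyA, (hdisj i).sep_mem_eq_singleton hA hzA]
  have hcont : Continuous f := continuous_pi fun i =>
    ((IsLocallyConstant.iff_eventually_eq _).2 (hlocal i)).continuous
  have hinj : Injective f := fun y z hyz => Subtype.ext <| hsep y y.2 z z.2 fun i A hA => by
    simpa [f, hA] using Set.ext_iff.1 (congrFun hyz i) A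
  have hind : IsInducing f := by
    refine isInducing_iff_nhds.2 fun y => le_antisymm hcont.continuousAt.le_comap fun N hN => ?_
    obtain ⟨O, hO, hON⟩ := (mem_nhds_subtype _ _ _).1 hN
    obtain ⟨s, hs⟩ := exists_finset_sep_eq_subset_of_mem_nhds hopen hdisj hreg hsep y.2 hO
    exact ⟨(s : Set ι).pi fun i => {f y i},
      (isOpen_set_pi s.finite_toSet fun _ _ => isOpen_discrete _).mem_nhds fun _ _ => rfl,
      fun z hz => hON (hs fun i hi => hz i hi)⟩
  exact IsEmbedding.metrizableSpace ⟨hind, hinj⟩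

end Metrizable

end

/-- Every Gruenhage compact Hausdorff space has a dense `Gδ` metrizable subspace. -/
theorem gruenhage_compact_dense_Gdelta_metrizable
    {K : Type*} [TopologicalSpace K] [CompactSpace K] [T2Space K]
    (h : IsGruenhage K) :
    ∃ S : Set K, Dense S ∧ IsGδ S ∧ TopologicalSpace.MetrizableSpace S := by
  obtain ⟨c, hc, hsep⟩ := h.exists_isDenseCellular_separating
  obtain ⟨𝒜, h𝒜, h𝒜c, hreg⟩ := exists_isDenseCellular_seq_closure_subset hc
  have hopen : ∀ j, IsOpen (⋃₀ 𝒜 j) := fun j => isOpen_sUnion (h𝒜 j).isOpen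
  have hsub : ⋂ j, ⋃₀ 𝒜 j ⊆ ⋂ t, ⋃₀ c t := fun x hx =>
    Set.mem_iInter.2 fun t => h𝒜c t ▸ Set.mem_iInter.1 hx (t, 0)
  refine ⟨⋂ j, ⋃₀ 𝒜 j, dense_iInter_of_isOpen hopen fun j => (h𝒜 j).dense,
    .iInter_of_isOpen hopen, metrizableSpace_iInter_sUnion (fun j => (h𝒜 j).isOpen)
      (fun j => (h𝒜 j).pairwiseDisjoint) hreg fun x hx y hy hxy => ?_⟩
  exact hsep x (hsub hx) y (hsub hy) fun t => h𝒜c t ▸ hxy (t, 0)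
end

section
/- Let X be a topological space and let 𝒰 = ⋃_{n∈ℕ} 𝒰ₙ be a family of open subsets of X which is separating (for all distinct x, y ∈ X some U ∈ 𝒰 contains exactly one of x and y) and weakly σ-point-finite (for every x ∈ X and every U ∈ 𝒰 there exists n ∈ ℕ such that U ∈ 𝒰ₙ and {V ∈ 𝒰ₙ : x ∈ V} is finite). Then the decomposition 𝒰 = ⋃_{n∈ℕ} 𝒰ₙ witnesses that X is Gruenhage: for all distinct x, y ∈ X there exists n ∈ ℕ such that some U ∈ 𝒰ₙ contains exactly one of x and y, and {V ∈ 𝒰ₙ : x ∈ V} is finite or {V ∈ 𝒰ₙ : y ∈ V} is finite. In particular every space admitting a separating weakly σ-point-finite family of open sets (e.g. every Gul'ko compact space) is Gruenhage. -/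
theorem weaklySigmaPointFinite_separating_gruenhage_general
    {X : Type*} (𝒰 : ℕ → Set (Set X))
    (hsep : ∀ x y : X, x ≠ y → ∃ n, ∃ U ∈ 𝒰 n, Xor' (x ∈ U) (y ∈ U))
    (hwpf : ∀ (x : X) (U : Set X), (∃ n, U ∈ 𝒰 n) →
      ∃ n, U ∈ 𝒰 n ∧ {V ∈ 𝒰 n | x ∈ V}.Finite) :
    ∀ x y : X, x ≠ y →
      ∃ n, (∃ U ∈ 𝒰 n, Xor' (x ∈ U) (y ∈ U)) ∧
        ({V ∈ 𝒰 n | x ∈ V}.Finite ∨ {V ∈ 𝒰 n | y ∈ V}.Finite) := by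
  intro x y hxy
  obtain ⟨n₀, U, hU, hxor⟩ := hsep x y hxy
  -- Re-index `U` at a level where the point it contains has finite order.
  rcases hxor with ⟨hx, hy⟩ | ⟨hy, hx⟩
  · obtain ⟨n, hUn, hfin⟩ := hwpf x U ⟨n₀, hU⟩
    exact ⟨n, ⟨U, hUn, .inl ⟨hx, hy⟩⟩, .inl hfin⟩
  · obtain ⟨n, hUn, hfin⟩ := hwpf y U ⟨n₀, hU⟩
    exact ⟨n, ⟨U, hUn, .inr ⟨hy, hx⟩⟩, .inr hfin⟩

/-- A separating, weakly σ-point-finite family of open sets witnesses the Gruenhage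
property with the same decomposition. -/
theorem weaklySigmaPointFinite_separating_gruenhage
    {X : Type*} [TopologicalSpace X] (𝒰 : ℕ → Set (Set X))
    (hopen : ∀ n, ∀ U ∈ 𝒰 n, IsOpen U)
    (hsep : ∀ x y : X, x ≠ y → ∃ n, ∃ U ∈ 𝒰 n, Xor' (x ∈ U) (y ∈ U))
    (hwpf : ∀ (x : X) (U : Set X), (∃ n, U ∈ 𝒰 n) →
      ∃ n, U ∈ 𝒰 n ∧ {V ∈ 𝒰 n | x ∈ V}.Finite) :
    ∀ x y : X, x ≠ y →
      ∃ n, (∃ U ∈ 𝒰 n, Xor' (x ∈ U) (y ∈ U)) ∧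
        ({V ∈ 𝒰 n | x ∈ V}.Finite ∨ {V ∈ 𝒰 n | y ∈ V}.Finite) :=
  weaklySigmaPointFinite_separating_gruenhage_general 𝒰 hsep hwpf
end

section
/- Let X be a real Banach space with a sequence of seminorms (pₙ)_{n∈ℕ} such that the formula N(x)² = Σ_{n=0}^∞ pₙ(x)² defines a norm N on X equivalent to the given norm. If x, y ∈ X satisfy N(x) = N(y) = N((x+y)/2), then pₙ(x) = pₙ(y) = pₙ((x+y)/2) for every n ∈ ℕ. -/
/-!
Each `pₙ` is convex, so `pₙ(m) ≤ (pₙ x + pₙ y)/2` at the midpoint `m`, and squaring and averaging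
gives `pₙ(m)² ≤ (pₙ(x)² + pₙ(y)²)/2`. Summing, the defects of these inequalities are nonnegative
and add up to `(N(x)² + N(y)²)/2 - N(m)² = 0`, so every defect vanishes; equality in the
second inequality forces `pₙ x = pₙ y`, and then equality in the first forces `pₙ m = pₙ x`.
-/

lemma Seminorm.apply_midpoint_le {E : Type*} [AddCommGroup E] [Module ℝ E]
    (p : Seminorm ℝ E) (x y : E) : p ((2⁻¹ : ℝ) • (x + y)) ≤ (p x + p y) / 2 := by
  rw [map_smul_eq_mul, Real.norm_of_nonneg (by norm_num)]
  linarith [map_add_le_add p x y]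

lemma sq_le_avg_sq_of_le_avg {a b c : ℝ} (hc : 0 ≤ c) (h : c ≤ (a + b) / 2) :
    c ^ 2 ≤ (a ^ 2 + b ^ 2) / 2 := by
  nlinarith [sq_nonneg (a - b)]

lemma eq_and_eq_of_le_avg_of_avg_sq_le {a b c : ℝ} (hc : 0 ≤ c) (h : c ≤ (a + b) / 2)
    (hsq : (a ^ 2 + b ^ 2) / 2 ≤ c ^ 2) : a = b ∧ a = c := by
  have hab : a = b := by nlinarith [sq_nonneg (a - b)]
  subst hab
  exact ⟨rfl, by nlinarith⟩

theorem Seminorm.eq_of_tsum_sq_midpoint {ι E : Type*} [AddCommGroup E] [Module ℝ E]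
    (p : ι → Seminorm ℝ E) {x y : E}
    (hx : Summable fun i => p i x ^ 2) (hy : Summable fun i => p i y ^ 2)
    (hm : Summable fun i => p i ((2⁻¹ : ℝ) • (x + y)) ^ 2)
    (hsum : (∑' i, p i x ^ 2 + ∑' i, p i y ^ 2) / 2 ≤ ∑' i, p i ((2⁻¹ : ℝ) • (x + y)) ^ 2) :
    ∀ i, p i x = p i y ∧ p i x = p i ((2⁻¹ : ℝ) • (x + y)) := by
  set m := (2⁻¹ : ℝ) • (x + y)
  set defect := fun i => (p i x ^ 2 + p i y ^ 2) / 2 - p i m ^ 2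
  have hdefect_nonneg : ∀ i, 0 ≤ defect i := fun i =>
    sub_nonneg.2 (sq_le_avg_sq_of_le_avg (apply_nonneg _ _) ((p i).apply_midpoint_le x y))
  have hdefect_sum : HasSum defect ((∑' i, p i x ^ 2 + ∑' i, p i y ^ 2) / 2 - ∑' i, p i m ^ 2) :=
    ((hx.hasSum.add hy.hasSum).div_const 2).sub hm.hasSum
  intro i
  have hdefect_nonpos : defect i ≤ 0 :=
    (le_hasSum hdefect_sum i fun j _ => hdefect_nonneg j).trans (sub_nonpos.2 hsum)
  exact eq_and_eq_of_le_avg_of_avg_sq_le (apply_nonneg _ _) ((p i).apply_midpoint_le x y)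
    (sub_nonpos.1 hdefect_nonpos)

theorem seminorm_sum_sq_convexity_general
    {X : Type*} [NormedAddCommGroup X] [NormedSpace ℝ X]
    (p : ℕ → Seminorm ℝ X) (N : X → ℝ)
    (hsummable : ∀ x : X, Summable fun n => (p n x) ^ 2)
    (hN : ∀ x : X, N x ^ 2 = ∑' n, (p n x) ^ 2)
    (x y : X) (hxy : N x = N y) (hmid : N x = N ((2⁻¹ : ℝ) • (x + y))) :
    ∀ n, p n x = p n y ∧ p n x = p n ((2⁻¹ : ℝ) • (x + y)) := by
  refine Seminorm.eq_of_tsum_sq_midpoint p (hsummable x) (hsummable y) (hsummable _) ?_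
  rw [← hN, ← hN, ← hN, ← hxy, ← hmid]
  linarith

/-- If `N(x)² = Σ pₙ(x)²` defines a norm equivalent to the given norm of the Banach
space `X`, and `N x = N y = N ((x+y)/2)`, then `pₙ x = pₙ y = pₙ ((x+y)/2)` for all `n`. -/
theorem seminorm_sum_sq_convexity
    {X : Type*} [NormedAddCommGroup X] [NormedSpace ℝ X] [CompleteSpace X]
    (p : ℕ → Seminorm ℝ X) (N : X → ℝ)
    (hsummable : ∀ x : X, Summable fun n => (p n x) ^ 2)
    (hNnonneg : ∀ x : X, 0 ≤ N x)
    (hN : ∀ x : X, N x ^ 2 = ∑' n, (p n x) ^ 2)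
    (hequiv : ∃ a b : ℝ, 0 < a ∧ 0 < b ∧ ∀ x : X, a * ‖x‖ ≤ N x ∧ N x ≤ b * ‖x‖)
    (x y : X) (hxy : N x = N y) (hmid : N x = N ((2⁻¹ : ℝ) • (x + y))) :
    ∀ n, p n x = p n y ∧ p n x = p n ((2⁻¹ : ℝ) • (x + y)) :=
  seminorm_sum_sq_convexity_general p N hsummable hN x y hxy hmid
end

section
/- Let K be a compact Hausdorff space which is scattered and descriptive (i.e., K has a σ-isolated network). Then K is σ-discrete: K can be written as K = ⋃_{n∈ℕ} Dₙ where each Dₙ is discrete in its subspace topology. -/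
/-- A topological space is *scattered* if every nonempty closed subset has a point
isolated in that subset. -/
def Scattered (X : Type*) [TopologicalSpace X] : Prop :=
  ∀ C : Set X, IsClosed C → C.Nonempty → ∃ x ∈ C, ∃ U : Set X, IsOpen U ∧ U ∩ C = {x}

/-- A family of pairwise disjoint sets is *isolated* if each point of each member has an
open neighbourhood meeting no other member. -/
def IsIsolatedFamily {X : Type*} [TopologicalSpace X] (ℋ : Set (Set X)) : Prop :=
  ℋ.PairwiseDisjoint id ∧
  ∀ H ∈ ℋ, ∀ x ∈ H, ∃ U : Set X, IsOpen U ∧ x ∈ U ∧ ∀ H' ∈ ℋ, H' ≠ H → U ∩ H' = ∅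

/-- `ℋ` is a *network* for `X`: every point of every open set is contained in a member of
`ℋ` included in that open set. -/
def IsNetwork {X : Type*} [TopologicalSpace X] (ℋ : Set (Set X)) : Prop :=
  ∀ U : Set X, IsOpen U → ∀ x ∈ U, ∃ H ∈ ℋ, x ∈ H ∧ H ⊆ U

/-- A compact space is *descriptive* if it has a σ-isolated network. -/
def IsDescriptive (X : Type*) [TopologicalSpace X] : Prop :=
  ∃ ℋ : ℕ → Set (Set X), (∀ n, IsIsolatedFamily (ℋ n)) ∧ IsNetwork (⋃ n, ℋ n)

/-!
Stratify a scattered space by its Cantor–Bendixson derivatives `X⁽ᵅ⁾`: every point `x` is isolated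
in the level `X⁽ʳ⁽ˣ⁾⁾` of its rank, by an open set `U x`. As the levels decrease, two distinct
points can never lie in each other's neighbourhoods `U`. Given a σ-isolated network `⋃ₙ ℋₙ`,
choose for each `x` a member `H x ∈ ℋ_{n x}` with `x ∈ H x ⊆ U x`, and let `Dₙ = {x | n x = n}`.
If `x, y ∈ Dₙ` and `y` lies in the neighbourhood of `x` that avoids the other members of `ℋₙ`,
then `H y = H x`, so each of `x, y` lies in the other's `U`, and `y = x`.
-/

open Set

universe u

variable {X : Type u} [TopologicalSpace X]

def IsSigmaDiscrete (X : Type*) [TopologicalSpace X] : Prop :=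
  ∃ D : ℕ → Set X, (⋃ n, D n) = univ ∧ ∀ n, ∀ x ∈ D n, ∃ U : Set X, IsOpen U ∧ U ∩ D n = {x}

def nonisolatedPoints (A : Set X) : Set X :=
  {x ∈ A | ¬∃ U : Set X, IsOpen U ∧ U ∩ A = {x}}

theorem nonisolatedPoints_subset (A : Set X) : nonisolatedPoints A ⊆ A := fun _ hx => hx.1

theorem isClosed_nonisolatedPoints {A : Set X} (hA : IsClosed A) :
    IsClosed (nonisolatedPoints A) := by
  rw [← isOpen_compl_iff, isOpen_iff_forall_mem_open]
  intro x hx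
  by_cases hxA : x ∈ A
  · obtain ⟨U, hUo, hUA⟩ : ∃ U : Set X, IsOpen U ∧ U ∩ A = {x} := by
      by_contra h
      exact hx ⟨hxA, h⟩
    refine ⟨U, fun y hyU hy => hy.2 ⟨U, hUo, ?_⟩, hUo, (hUA.symm.subset rfl).1⟩
    have hyx : y ∈ U ∩ A := ⟨hyU, hy.1⟩
    rw [hUA, mem_singleton_iff] at hyx
    rw [hyx, hUA]
  · exact ⟨Aᶜ, fun y hy h => hy h.1, hA.isOpen_compl, hxA⟩

variable (X) in
/-- `X⁽ᵅ⁾ = ⋂_{β < α} (X⁽ᵝ⁾)'` treats successor and limit stages alike; `X⁽⁰⁾ = univ`. -/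
noncomputable def cantorBendixson : Ordinal.{u} → Set X
  | α => ⋂ β : Iio α, nonisolatedPoints (cantorBendixson β.1)
  termination_by α => α
  decreasing_by exact β.2

theorem cantorBendixson_eq (α : Ordinal.{u}) :
    cantorBendixson X α = ⋂ β : Iio α, nonisolatedPoints (cantorBendixson X β.1) := by
  rw [cantorBendixson]

theorem cantorBendixson_subset_nonisolatedPoints {α β : Ordinal.{u}} (h : β < α) :
    cantorBendixson X α ⊆ nonisolatedPoints (cantorBendixson X β) := by
  rw [cantorBendixson_eq α]
  exact iInter_subset (fun γ : Iio α => nonisolatedPoints (cantorBendixson X γ.1)) ⟨β, h⟩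

theorem cantorBendixson_antitone : Antitone (cantorBendixson X) := by
  intro β α h
  rcases h.eq_or_lt with rfl | h
  · exact subset_rfl
  · exact (cantorBendixson_subset_nonisolatedPoints h).trans (nonisolatedPoints_subset _)

theorem isClosed_cantorBendixson (α : Ordinal.{u}) : IsClosed (cantorBendixson X α) := by
  induction α using WellFoundedLT.induction with
  | _ α ih =>
    rw [cantorBendixson_eq]
    exact isClosed_iInter fun β => isClosed_nonisolatedPoints (ih β.1 β.2)

/-- Otherwise choosing an isolated point of each level would inject `Ordinal.{u}` into `X`. -/
theorem Scattered.exists_cantorBendixson_eq_empty (hscat : Scattered X) :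
    ∃ α : Ordinal.{u}, cantorBendixson X α = ∅ := by
  by_contra! hne
  choose f hf U hUo hU using fun α => hscat _ (isClosed_cantorBendixson α) (hne α)
  have hf_not_mem : ∀ α, f α ∉ nonisolatedPoints (cantorBendixson X α) :=
    fun α h => h.2 ⟨U α, hUo α, hU α⟩
  have hinj : Function.Injective f := by
    intro α β hαβ
    by_contra hne'
    rcases lt_or_gt_of_ne hne' with hlt | hlt
    · exact hf_not_mem α (hαβ ▸ cantorBendixson_subset_nonisolatedPoints hlt (hf β))
    · exact hf_not_mem β (hαβ ▸ cantorBendixson_subset_nonisolatedPoints hlt (hf α))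
  exact not_injective_of_ordinal f hinj

theorem Scattered.exists_isolated_in_cantorBendixson (hscat : Scattered X) (x : X) :
    ∃ α : Ordinal.{u}, x ∈ cantorBendixson X α ∧
      ∃ U : Set X, IsOpen U ∧ U ∩ cantorBendixson X α = {x} := by
  by_contra! hnot
  have hmem : ∀ α, x ∈ cantorBendixson X α := by
    intro α
    induction α using WellFoundedLT.induction with
    | _ α ih =>
      rw [cantorBendixson_eq, mem_iInter]
      exact fun β => ⟨ih β.1 β.2, fun ⟨U, hUo, hU⟩ => hnot β.1 (ih β.1 β.2) U hUo hU⟩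
  obtain ⟨α, hα⟩ := hscat.exists_cantorBendixson_eq_empty
  exact (hα ▸ hmem α : x ∈ (∅ : Set X))

theorem Scattered.exists_mutuallySeparating_nhds (hscat : Scattered X) :
    ∃ U : X → Set X, (∀ x, IsOpen (U x) ∧ x ∈ U x) ∧ ∀ x y, x ∈ U y → y ∈ U x → x = y := by
  choose r hr U hUo hU using hscat.exists_isolated_in_cantorBendixson
  have hxU : ∀ x, x ∈ U x := fun x => (hU x ▸ mem_singleton x : x ∈ U x ∩ _).1
  refine ⟨U, fun x => ⟨hUo x, hxU x⟩, fun x y hxy hyx => ?_⟩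
  rcases le_total (r y) (r x) with hle | hle
  · have hx : x ∈ U y ∩ cantorBendixson X (r y) := ⟨hxy, cantorBendixson_antitone hle (hr x)⟩
    rwa [hU y] at hx
  · have hy : y ∈ U x ∩ cantorBendixson X (r x) := ⟨hyx, cantorBendixson_antitone hle (hr y)⟩
    exact (hU x ▸ hy : y ∈ ({x} : Set X)).symm

theorem IsDescriptive.isSigmaDiscrete_of_mutuallySeparating_nhds (hdesc : IsDescriptive X)
    {U : X → Set X} (hU : ∀ x, IsOpen (U x) ∧ x ∈ U x)
    (hsep : ∀ x y, x ∈ U y → y ∈ U x → x = y) : IsSigmaDiscrete X := by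
  obtain ⟨ℋ, hiso, hnet⟩ := hdesc
  have hmember : ∀ x, ∃ n, ∃ H ∈ ℋ n, x ∈ H ∧ H ⊆ U x := fun x => by
    obtain ⟨H, hH, hxH, hHU⟩ := hnet (U x) (hU x).1 x (hU x).2
    obtain ⟨n, hn⟩ := mem_iUnion.mp hH
    exact ⟨n, H, hn, hxH, hHU⟩
  choose n H hH hxH hHU using hmember
  refine ⟨fun m => {x | n x = m}, eq_univ_of_forall fun x => mem_iUnion.mpr ⟨n x, rfl⟩, ?_⟩
  rintro m x rfl
  obtain ⟨V, hVo, hxV, hV⟩ := (hiso (n x)).2 (H x) (hH x) x (hxH x)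
  refine ⟨U x ∩ V, (hU x).1.inter hVo, eq_singleton_iff_unique_mem.mpr ⟨⟨⟨(hU x).2, hxV⟩, rfl⟩, ?_⟩⟩
  rintro y ⟨⟨hyU, hyV⟩, hy : n y = n x⟩
  have hHy : H y = H x := by
    by_contra hne
    exact not_nonempty_iff_eq_empty.mpr (hV (H y) (hy ▸ hH y) hne) ⟨y, hyV, hxH y⟩
  exact hsep y x hyU (hHU y (hHy ▸ hxH x))

theorem scattered_descriptive_sigmaDiscrete_general
    {K : Type*} [TopologicalSpace K]
    (hscat : Scattered K) (hdesc : IsDescriptive K) :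
    ∃ D : ℕ → Set K, (⋃ n, D n) = Set.univ ∧
      ∀ n, ∀ x ∈ D n, ∃ U : Set K, IsOpen U ∧ U ∩ D n = {x} := by
  obtain ⟨U, hU, hsep⟩ := hscat.exists_mutuallySeparating_nhds
  exact hdesc.isSigmaDiscrete_of_mutuallySeparating_nhds hU hsep

/-- A scattered descriptive compact Hausdorff space is σ-discrete. -/
theorem scattered_descriptive_sigmaDiscrete
    {K : Type*} [TopologicalSpace K] [CompactSpace K] [T2Space K]
    (hscat : Scattered K) (hdesc : IsDescriptive K) :
    ∃ D : ℕ → Set K, (⋃ n, D n) = Set.univ ∧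
      ∀ n, ∀ x ∈ D n, ∃ U : Set K, IsOpen U ∧ U ∩ D n = {x} :=
  scattered_descriptive_sigmaDiscrete_general hscat hdesc
end

section
/- Let X be a regular topological space and let ℋ = ⋃_{n∈ℕ} ℋₙ be a network for X where each ℋₙ is an isolated family. For each n ∈ ℕ set Aₙ = closure(⋃ℋₙ) and, for H ∈ ℋₙ, set U_H = X \ closure(⋃(ℋₙ \ {H})). Then each family 𝒢ₙ = {Aₙ ∩ U_H : H ∈ ℋₙ} is isolated (indeed consists of pairwise disjoint sets, each relatively open in the closed set Aₙ), and 𝒢 = ⋃_{n∈ℕ} 𝒢ₙ is a network for X. -/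
/-!
Shrinking a member `H` of an isolated family `𝒦` to `closure (⋃₀ 𝒦) \ closure (⋃₀ (𝒦 \ {H}))`
keeps `H` inside (by isolation), and the shrunken set lies in `closure H`, since
`closure (⋃₀ 𝒦) ⊆ closure (⋃₀ (𝒦 \ {H})) ∪ closure H`. The second inclusion makes the new sets
pairwise separated by the open sets `(closure (⋃₀ (𝒦 \ {H})))ᶜ`, whatever `𝒦` is; together with a
closed neighbourhood inside a given open set, supplied by regularity, it also transfers the
network property.
-/

open Set

section

variable {X : Type*} [TopologicalSpace X]

/-- The set `Aₙ ∩ U_H` of the paper, for `𝒦 = ℋₙ`. -/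
def manicure (𝒦 : Set (Set X)) (H : Set X) : Set X :=
  closure (⋃₀ 𝒦) ∩ (closure (⋃₀ (𝒦 \ {H})))ᶜ

lemma manicure_subset_closure (𝒦 : Set (Set X)) (H : Set X) :
    manicure 𝒦 H ⊆ closure H := by
  have hsplit : ⋃₀ 𝒦 ⊆ ⋃₀ (𝒦 \ {H}) ∪ H := by
    rintro x ⟨K, hK, hxK⟩
    by_cases hKH : K = H
    · exact Or.inr (hKH ▸ hxK)
    · exact Or.inl ⟨K, ⟨hK, hKH⟩, hxK⟩
  rintro x ⟨hx, hx'⟩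
  exact (closure_union.subset (closure_mono hsplit hx)).resolve_left hx'

lemma manicure_subset_closure_sUnion_diff_singleton {𝒦 : Set (Set X)} {H H' : Set X}
    (hH : H ∈ 𝒦) (hne : H ≠ H') : manicure 𝒦 H ⊆ closure (⋃₀ (𝒦 \ {H'})) :=
  (manicure_subset_closure 𝒦 H).trans (closure_mono (subset_sUnion_of_mem ⟨hH, hne⟩))

lemma isIsolatedFamily_image_manicure (𝒦 : Set (Set X)) :
    IsIsolatedFamily (manicure 𝒦 '' 𝒦) := by
  constructor
  · rintro _ ⟨H, hH, rfl⟩ _ ⟨H', -, rfl⟩ hne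
    have hHH' : H ≠ H' := by rintro rfl; exact hne rfl
    exact disjoint_left.2 fun x hx hx' =>
      hx'.2 (manicure_subset_closure_sUnion_diff_singleton hH hHH' hx)
  · rintro _ ⟨H, -, rfl⟩ x hx
    refine ⟨_, isClosed_closure.isOpen_compl, hx.2, ?_⟩
    rintro _ ⟨H', hH', rfl⟩ hne
    have hH'H : H' ≠ H := by rintro rfl; exact hne rfl
    exact eq_empty_of_forall_notMem fun y hy =>
      hy.1 (manicure_subset_closure_sUnion_diff_singleton hH' hH'H hy.2)

lemma subset_manicure {𝒦 : Set (Set X)} (hiso : IsIsolatedFamily 𝒦) {H : Set X} (hH : H ∈ 𝒦) :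
    H ⊆ manicure 𝒦 H := by
  intro x hx
  refine ⟨subset_closure ⟨H, hH, hx⟩, fun hx' => ?_⟩
  obtain ⟨W, hW, hxW, hWsep⟩ := hiso.2 H hH x hx
  have hdisj : Disjoint W (⋃₀ (𝒦 \ {H})) :=
    disjoint_sUnion_right.2 fun K hK => disjoint_iff_inter_eq_empty.2 (hWsep K hK.1 hK.2)
  exact disjoint_left.1 (hdisj.closure_right hW) hxW hx'

lemma IsNetwork.exists_closure_subset [RegularSpace X] {ℋ : Set (Set X)} (hnet : IsNetwork ℋ)
    {U : Set X} (hU : IsOpen U) {x : X} (hx : x ∈ U) :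
    ∃ H ∈ ℋ, x ∈ H ∧ closure H ⊆ U := by
  obtain ⟨t, ht, htc, htU⟩ := exists_mem_nhds_isClosed_subset (hU.mem_nhds hx)
  obtain ⟨H, hHℋ, hxH, hHt⟩ :=
    hnet (interior t) isOpen_interior x (mem_interior_iff_mem_nhds.2 ht)
  exact ⟨H, hHℋ, hxH,
    (closure_minimal (hHt.trans interior_subset) htc).trans htU⟩

end

/-- The "manicure" lemma: in a regular space, a σ-isolated network may be replaced by a
σ-isolated network whose members are of the form (closed set) ∩ (open set). -/
theorem manicure_network
    {X : Type*} [TopologicalSpace X] [RegularSpace X]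
    (ℋ : ℕ → Set (Set X))
    (hiso : ∀ n, IsIsolatedFamily (ℋ n))
    (hnet : IsNetwork (⋃ n, ℋ n)) :
    (∀ n, IsClosed (closure (⋃₀ ℋ n))) ∧
    (∀ n, ∀ H ∈ ℋ n, IsOpen (closure (⋃₀ (ℋ n \ {H})))ᶜ) ∧
    (∀ n, IsIsolatedFamily
      ((fun H => closure (⋃₀ ℋ n) ∩ (closure (⋃₀ (ℋ n \ {H})))ᶜ) '' ℋ n)) ∧
    IsNetwork (⋃ n,
      (fun H => closure (⋃₀ ℋ n) ∩ (closure (⋃₀ (ℋ n \ {H})))ᶜ) '' ℋ n) := by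
  refine ⟨fun _ => isClosed_closure, fun _ _ _ => isClosed_closure.isOpen_compl,
    fun n => isIsolatedFamily_image_manicure (ℋ n), ?_⟩
  intro U hU x hx
  obtain ⟨H, hHℋ, hxH, hHU⟩ := hnet.exists_closure_subset hU hx
  obtain ⟨n, hHn⟩ := mem_iUnion.1 hHℋ
  exact ⟨manicure (ℋ n) H, mem_iUnion.2 ⟨n, H, hHn, rfl⟩, subset_manicure (hiso n) hHn hxH,
    (manicure_subset_closure _ _).trans hHU⟩
end

section
/- For a topological space X the following are equivalent: (i) X is Gruenhage; (ii) there exist closed sets Aₙ ⊆ X and families ℋₙ of pairwise disjoint sets, each relatively open in Aₙ (n ∈ ℕ), such that ⋃_{n∈ℕ} ℋₙ separates points of X; (iii) there exist open sets Rₙ ⊆ X and families 𝒰ₙ of open subsets of X (n ∈ ℕ) such that Rₙ ⊆ U for every U ∈ 𝒰ₙ, U ∩ V = Rₙ whenever U, V ∈ 𝒰ₙ are distinct, and ⋃_{n∈ℕ} 𝒰ₙ separates points of X. -/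
/-- A family of sets *separates points* if for distinct `x, y` some member contains
exactly one of them. -/
def SepPoints {X : Type*} (𝒱 : Set (Set X)) : Prop :=
  ∀ x y : X, x ≠ y → ∃ V ∈ 𝒱, Xor' (x ∈ V) (y ∈ V)

/-!
Each formulation yields the next. A Gruenhage family `𝒰` is cut into the fibres of
`x ↦ {U ∈ 𝒰 | x ∈ U}` over subfamilies of size `k`; the points lying in at most `k` members form
a closed set `A`, in which these fibres are relatively open and pairwise disjoint, and the
fibre of a point with finitely many memberships excludes every point with other memberships.
Next, a disjoint family `ℋ` of relatively open subsets of a closed set `A` becomes the open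
sunflower `{Aᶜ ∪ H | H ∈ ℋ ∪ {∅}}` with kernel `Aᶜ`. Finally, in a sunflower a point outside
the kernel lies in at most one member, which is the finiteness condition of the Gruenhage
property.
-/

section

open Set

variable {X : Type*}

def membersAt (𝒰 : Set (Set X)) (x : X) : Set (Set X) := {U ∈ 𝒰 | x ∈ U}

def membersAtFibres (𝒰 : Set (Set X)) (k : ℕ) : Set (Set X) :=
  (fun s => membersAt 𝒰 ⁻¹' {s}) '' {s | s ⊆ 𝒰 ∧ s.encard = k}

/-- Formulation (ii), for a single index `n`. -/
def IsDisjointRelOpenFamily [TopologicalSpace X] (A : Set X) (ℋ : Set (Set X)) : Prop :=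
  IsClosed A ∧ ℋ.PairwiseDisjoint id ∧ ∀ H ∈ ℋ, ∃ V : Set X, IsOpen V ∧ H = A ∩ V

/-- Formulation (iii), for a single index `n`. -/
def IsOpenSunflower [TopologicalSpace X] (R : Set X) (𝒰 : Set (Set X)) : Prop :=
  IsOpen R ∧ (∀ U ∈ 𝒰, IsOpen U) ∧ (∀ U ∈ 𝒰, R ⊆ U) ∧ 𝒰.Pairwise (fun U V => U ∩ V = R)

lemma exists_seq_of_countable {α ι : Type*} [Countable ι] [Nonempty ι]
    {p : α → Set X → Prop} (a : ι → α) (b : ι → Set X) (h : ∀ i, p (a i) (b i)) :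
    ∃ (a' : ℕ → α) (b' : ℕ → Set X), (∀ n, p (a' n) (b' n)) ∧ ⋃ n, b' n = ⋃ i, b i := by
  obtain ⟨f, hf⟩ := exists_surjective_nat ι
  exact ⟨a ∘ f, b ∘ f, fun n => h (f n), hf.iUnion_comp b⟩

section Fibres

variable {𝒰 : Set (Set X)}

lemma membersAt_ne_of_xor {U : Set X} {x y : X} (hU : U ∈ 𝒰) (hxy : Xor (x ∈ U) (y ∈ U)) :
    membersAt 𝒰 x ≠ membersAt 𝒰 y := by
  intro h
  have hU' : U ∈ membersAt 𝒰 x ↔ U ∈ membersAt 𝒰 y := by rw [h]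
  simp only [membersAt, mem_ofPred_eq, hU, true_and] at hU'
  rcases hxy with ⟨hx, hy⟩ | ⟨hy, hx⟩ <;> tauto

lemma membersAt_preimage_singleton {s : Set (Set X)} {k : ℕ} (hs : s ⊆ 𝒰) (hk : s.encard = k) :
    membersAt 𝒰 ⁻¹' {s} = {x | (membersAt 𝒰 x).encard ≤ k} ∩ ⋂₀ s := by
  ext x
  simp only [mem_preimage, mem_singleton_iff, mem_inter_iff, mem_ofPred_eq, mem_sInter]
  constructor
  · rintro rfl
    exact ⟨hk.le, fun U hU => hU.2⟩
  · rintro ⟨hxk, hxs⟩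
    have hsx : s ⊆ membersAt 𝒰 x := fun U hU => ⟨hs hU, hxs U hU⟩
    exact ((finite_of_encard_eq_coe hk).eq_of_subset_of_encard_le hsx (hk ▸ hxk)).symm

lemma exists_mem_membersAtFibres {x y : X} (hx : (membersAt 𝒰 x).Finite)
    (hxy : membersAt 𝒰 x ≠ membersAt 𝒰 y) :
    ∃ k, ∃ H ∈ membersAtFibres 𝒰 k, x ∈ H ∧ y ∉ H :=
  ⟨(membersAt 𝒰 x).ncard, _, ⟨_, ⟨sep_subset _ _, hx.cast_ncard_eq.symm⟩, rfl⟩, rfl, hxy.symm⟩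

variable [TopologicalSpace X]

lemma isClosed_setOf_encard_membersAt_le (h𝒰 : ∀ U ∈ 𝒰, IsOpen U) (k : ℕ) :
    IsClosed {x | (membersAt 𝒰 x).encard ≤ k} := by
  rw [← isOpen_compl_iff, isOpen_iff_forall_mem_open]
  intro x hx
  obtain ⟨t, htx, htk⟩ := exists_subset_encard_eq (Order.add_one_le_of_lt (not_le.mp hx))
  have ht : t.Finite := finite_of_encard_eq_coe (k := k + 1) (by exact_mod_cast htk)
  refine ⟨⋂₀ t, fun z hz => ?_, ht.isOpen_sInter fun U hU => h𝒰 U (htx hU).1,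
    fun U hU => (htx hU).2⟩
  have htz : t ⊆ membersAt 𝒰 z := fun U hU => ⟨(htx hU).1, hz U hU⟩
  simp only [mem_compl_iff, mem_ofPred_eq, not_le]
  exact (ENat.add_one_le_iff (ENat.natCast_ne_top k)).mp (htk ▸ encard_le_encard htz)

lemma isDisjointRelOpenFamily_membersAtFibres (h𝒰 : ∀ U ∈ 𝒰, IsOpen U) (k : ℕ) :
    IsDisjointRelOpenFamily {x | (membersAt 𝒰 x).encard ≤ k} (membersAtFibres 𝒰 k) := by
  refine ⟨isClosed_setOf_encard_membersAt_le h𝒰 k, ?_, ?_⟩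
  · rintro _ ⟨s, -, rfl⟩ _ ⟨s', -, rfl⟩ hne
    exact Disjoint.preimage _ (disjoint_singleton.mpr fun h => hne (h ▸ rfl))
  · rintro _ ⟨s, ⟨hs, hk⟩, rfl⟩
    exact ⟨⋂₀ s, (finite_of_encard_eq_coe hk).isOpen_sInter fun U hU => h𝒰 U (hs hU),
      membersAt_preimage_singleton hs hk⟩

end Fibres

theorem IsGruenhage.exists_isDisjointRelOpenFamily [TopologicalSpace X] (h : IsGruenhage X) :
    ∃ (A : ℕ → Set X) (ℋ : ℕ → Set (Set X)),
      (∀ n, IsDisjointRelOpenFamily (A n) (ℋ n)) ∧ SepPoints (⋃ n, ℋ n) := by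
  obtain ⟨𝒰, h𝒰, hsep⟩ := h
  obtain ⟨A, ℋ, hAℋ, hℋ⟩ := exists_seq_of_countable
    (fun i : ℕ × ℕ => {x | (membersAt (𝒰 i.1) x).encard ≤ i.2})
    (fun i => membersAtFibres (𝒰 i.1) i.2)
    fun i => isDisjointRelOpenFamily_membersAtFibres (h𝒰 i.1) i.2
  refine ⟨A, ℋ, hAℋ, fun x y hxy => ?_⟩
  obtain ⟨n, ⟨U, hU, hxyU⟩, hfin⟩ := hsep x y hxy
  have hne := membersAt_ne_of_xor hU hxyU
  simp only [hℋ, mem_iUnion, Prod.exists]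
  rcases hfin with hx | hy
  · obtain ⟨k, H, hH, hxH, hyH⟩ := exists_mem_membersAtFibres hx hne
    exact ⟨H, ⟨n, k, hH⟩, Or.inl ⟨hxH, hyH⟩⟩
  · obtain ⟨k, H, hH, hyH, hxH⟩ := exists_mem_membersAtFibres hy hne.symm
    exact ⟨H, ⟨n, k, hH⟩, Or.inr ⟨hyH, hxH⟩⟩

section Sunflower

variable {A R : Set X} {ℋ : Set (Set X)}

lemma Set.PairwiseDisjoint.pairwise_union_inter_eq (hℋ : ℋ.PairwiseDisjoint id) :
    ((R ∪ ·) '' ℋ).Pairwise (fun U V => U ∩ V = R) := by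
  rintro _ ⟨H, hH, rfl⟩ _ ⟨H', hH', rfl⟩ hne
  have hHH' : Disjoint H H' := hℋ hH hH' fun h => hne (h ▸ rfl)
  change (R ∪ H) ∩ (R ∪ H') = R
  rw [← union_inter_distrib_left, hHH'.inter_eq, union_empty]

lemma subsingleton_membersAt_of_pairwise_inter_eq {𝒰 : Set (Set X)}
    (h𝒰 : 𝒰.Pairwise (fun U V => U ∩ V = R)) {x : X} (hx : x ∉ R) :
    (membersAt 𝒰 x).Subsingleton := by
  rintro U ⟨hU, hxU⟩ V ⟨hV, hxV⟩
  by_contra hUV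
  exact hx (h𝒰 hU hV hUV ▸ ⟨hxU, hxV⟩)

variable [TopologicalSpace X]

lemma IsDisjointRelOpenFamily.isOpenSunflower (h : IsDisjointRelOpenFamily A ℋ) :
    IsOpenSunflower Aᶜ ((Aᶜ ∪ ·) '' insert ∅ ℋ) := by
  obtain ⟨hA, hℋ, hrel⟩ := h
  refine ⟨hA.isOpen_compl, ?_, ?_, ?_⟩
  · rintro _ ⟨H, rfl | hH, rfl⟩
    · simpa using hA.isOpen_compl
    · obtain ⟨V, hV, rfl⟩ := hrel H hH
      change IsOpen (Aᶜ ∪ A ∩ V)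
      rw [union_inter_distrib_left, compl_union_self, univ_inter]
      exact hA.isOpen_compl.union hV
  · rintro _ ⟨H, -, rfl⟩
    exact subset_union_left
  · exact (hℋ.insert fun _ _ _ => empty_disjoint _).pairwise_union_inter_eq

lemma IsDisjointRelOpenFamily.exists_xor (h : IsDisjointRelOpenFamily A ℋ) {H : Set X}
    (hH : H ∈ ℋ) {x y : X} (hxy : Xor (x ∈ H) (y ∈ H)) :
    ∃ U ∈ (Aᶜ ∪ ·) '' insert ∅ ℋ, Xor (x ∈ U) (y ∈ U) := by
  wlog hxH : x ∈ H generalizing x y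
  · obtain ⟨U, hU, hyx⟩ := this (Or.symm hxy) (hxy.or.resolve_left hxH)
    exact ⟨U, hU, Or.symm hyx⟩
  have hyH : y ∉ H := fun hyH => by simp [Xor, hxH, hyH] at hxy
  obtain ⟨V, -, rfl⟩ := h.2.2 H hH
  by_cases hyA : y ∈ A
  · exact ⟨Aᶜ ∪ A ∩ V, ⟨_, mem_insert_of_mem _ hH, rfl⟩,
      Or.inl ⟨Or.inr hxH, fun hy => hy.elim (· hyA) hyH⟩⟩
  · exact ⟨Aᶜ ∪ ∅, ⟨∅, mem_insert _ _, rfl⟩, Or.inr ⟨Or.inl hyA, by simp [hxH.1]⟩⟩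

end Sunflower

variable [TopologicalSpace X]

theorem exists_isOpenSunflower_of_isDisjointRelOpenFamily {A : ℕ → Set X}
    {ℋ : ℕ → Set (Set X)} (hAℋ : ∀ n, IsDisjointRelOpenFamily (A n) (ℋ n))
    (hsep : SepPoints (⋃ n, ℋ n)) :
    ∃ (R : ℕ → Set X) (𝒰 : ℕ → Set (Set X)),
      (∀ n, IsOpenSunflower (R n) (𝒰 n)) ∧ SepPoints (⋃ n, 𝒰 n) := by
  refine ⟨fun n => (A n)ᶜ, fun n => ((A n)ᶜ ∪ ·) '' insert ∅ (ℋ n),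
    fun n => (hAℋ n).isOpenSunflower, fun x y hxy => ?_⟩
  obtain ⟨H, hH, hxyH⟩ := hsep x y hxy
  obtain ⟨n, hHn⟩ := mem_iUnion.mp hH
  obtain ⟨U, hU, hxyU⟩ := (hAℋ n).exists_xor hHn hxyH
  exact ⟨U, mem_iUnion_of_mem n hU, hxyU⟩

theorem isGruenhage_of_isOpenSunflower {R : ℕ → Set X} {𝒰 : ℕ → Set (Set X)}
    (h𝒰 : ∀ n, IsOpenSunflower (R n) (𝒰 n)) (hsep : SepPoints (⋃ n, 𝒰 n)) :
    IsGruenhage X := by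
  refine ⟨𝒰, fun n => (h𝒰 n).2.1, fun x y hxy => ?_⟩
  obtain ⟨U, hU, hxyU⟩ := hsep x y hxy
  obtain ⟨n, hUn⟩ := mem_iUnion.mp hU
  obtain ⟨-, -, hRU, hpair⟩ := h𝒰 n
  refine ⟨n, ⟨U, hUn, hxyU⟩, ?_⟩
  rcases hxyU with ⟨-, hyU⟩ | ⟨-, hxU⟩
  · exact Or.inr (subsingleton_membersAt_of_pairwise_inter_eq hpair
      fun hy => hyU (hRU U hUn hy)).finite
  · exact Or.inl (subsingleton_membersAt_of_pairwise_inter_eq hpair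
      fun hx => hxU (hRU U hUn hx)).finite

end

/-- Equivalent formulations of the Gruenhage property. -/
theorem isGruenhage_iff_formulations {X : Type*} [TopologicalSpace X] :
    (IsGruenhage X ↔
      ∃ (A : ℕ → Set X) (ℋ : ℕ → Set (Set X)),
        (∀ n, IsClosed (A n)) ∧
        (∀ n, (ℋ n).PairwiseDisjoint id) ∧
        (∀ n, ∀ H ∈ ℋ n, ∃ V : Set X, IsOpen V ∧ H = A n ∩ V) ∧
        SepPoints (⋃ n, ℋ n)) ∧
    (IsGruenhage X ↔
      ∃ (R : ℕ → Set X) (𝒰 : ℕ → Set (Set X)),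
        (∀ n, IsOpen (R n)) ∧
        (∀ n, ∀ U ∈ 𝒰 n, IsOpen U) ∧
        (∀ n, ∀ U ∈ 𝒰 n, R n ⊆ U) ∧
        (∀ n, ∀ U ∈ 𝒰 n, ∀ V ∈ 𝒰 n, U ≠ V → U ∩ V = R n) ∧
        SepPoints (⋃ n, 𝒰 n)) := by
  have h₂ : IsGruenhage X ↔ ∃ (A : ℕ → Set X) (ℋ : ℕ → Set (Set X)),
      (∀ n, IsDisjointRelOpenFamily (A n) (ℋ n)) ∧ SepPoints (⋃ n, ℋ n) := by
    refine ⟨IsGruenhage.exists_isDisjointRelOpenFamily, fun ⟨_, _, hAℋ, hsep⟩ => ?_⟩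
    obtain ⟨_, _, h𝒰, hsep'⟩ := exists_isOpenSunflower_of_isDisjointRelOpenFamily hAℋ hsep
    exact isGruenhage_of_isOpenSunflower h𝒰 hsep'
  have h₃ : IsGruenhage X ↔ ∃ (R : ℕ → Set X) (𝒰 : ℕ → Set (Set X)),
      (∀ n, IsOpenSunflower (R n) (𝒰 n)) ∧ SepPoints (⋃ n, 𝒰 n) := by
    refine ⟨fun h => ?_, fun ⟨_, _, h𝒰, hsep⟩ => isGruenhage_of_isOpenSunflower h𝒰 hsep⟩
    obtain ⟨_, _, hAℋ, hsep⟩ := h.exists_isDisjointRelOpenFamily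
    exact exists_isOpenSunflower_of_isDisjointRelOpenFamily hAℋ hsep
  simp only [IsDisjointRelOpenFamily, IsOpenSunflower, forall_and, and_assoc] at h₂ h₃
  exact ⟨h₂, h₃⟩
end

section
/- Every descriptive compact space is Gruenhage: if K is a compact Hausdorff space admitting a σ-isolated network, then K is Gruenhage. -/
/-!
Fix an isolated family `ℋ`. Isolation lets us swell each `H ∈ ℋ` to an open set `W H ⊇ H`
missing every other member of `ℋ`, and we take the open sets `W H` and `W H \ closure H`.
A point of `H` lies in no `W H'` with `H' ≠ H`, so it lies in at most one of these sets.
Given `x ≠ y`, Hausdorffness and the network property give `H` in some `ℋ n` with `x ∈ H` and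
`y ∉ closure H`; then `W H` (if `y ∉ W H`) or `W H \ closure H` (if `y ∈ W H`) separates them.
-/

open Set

section

variable {X : Type*} [TopologicalSpace X]

structure IsDisjointOpenExpansion (ℋ : Set (Set X)) (W : Set X → Set X) : Prop where
  isOpen : ∀ H ∈ ℋ, IsOpen (W H)
  subset : ∀ H ∈ ℋ, H ⊆ W H
  disjoint : ∀ H ∈ ℋ, ∀ H' ∈ ℋ, H ≠ H' → Disjoint (W H) H'

theorem IsIsolatedFamily.exists_isDisjointOpenExpansion {ℋ : Set (Set X)}
    (hℋ : IsIsolatedFamily ℋ) : ∃ W, IsDisjointOpenExpansion ℋ W := by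
  choose! U hU_open hU_mem hU_inter using hℋ.2
  refine ⟨fun H => ⋃ x ∈ H, U H x, ⟨fun H hH => isOpen_biUnion (hU_open H hH),
    fun H hH x hx => mem_biUnion hx (hU_mem H hH x hx), fun H hH H' hH' hne => ?_⟩⟩
  simp only [disjoint_iUnion_left]
  exact fun x hx => disjoint_iff_inter_eq_empty.2 (hU_inter H hH x hx H' hH' hne.symm)

theorem IsNetwork.exists_mem_notMem_closure [T2Space X] {𝒩 : Set (Set X)} (h𝒩 : IsNetwork 𝒩)
    {x y : X} (hxy : x ≠ y) : ∃ H ∈ 𝒩, x ∈ H ∧ y ∉ closure H := by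
  obtain ⟨u, v, hu, hv, hxu, hyv, huv⟩ := t2_separation hxy
  obtain ⟨H, hH, hxH, hHu⟩ := h𝒩 u hu x hxu
  exact ⟨H, hH, hxH, fun hy => (huv.mono_left hHu).closure_left hv |>.notMem_of_mem_right hyv hy⟩

def expansionFamily (ℋ : Set (Set X)) (W : Set X → Set X) : Set (Set X) :=
  ⋃ H ∈ ℋ, {W H, W H \ closure H}

namespace IsDisjointOpenExpansion

variable {ℋ : Set (Set X)} {W : Set X → Set X}

theorem isOpen_of_mem_expansionFamily (hW : IsDisjointOpenExpansion ℋ W) {V : Set X}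
    (hV : V ∈ expansionFamily ℋ W) : IsOpen V := by
  simp only [expansionFamily, mem_iUnion, mem_insert_iff, mem_singleton_iff] at hV
  obtain ⟨H, hH, rfl | rfl⟩ := hV
  exacts [hW.isOpen H hH, (hW.isOpen H hH).sdiff isClosed_closure]

theorem setOf_mem_expansionFamily_subset (hW : IsDisjointOpenExpansion ℋ W) {H : Set X}
    (hH : H ∈ ℋ) {x : X} (hx : x ∈ H) : {V ∈ expansionFamily ℋ W | x ∈ V} ⊆ {W H} := by
  rintro V ⟨hV, hxV⟩
  simp only [expansionFamily, mem_iUnion, mem_insert_iff, mem_singleton_iff] at hV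
  obtain ⟨H', hH', hV⟩ := hV
  have hxW : x ∈ W H' := by rcases hV with rfl | rfl; exacts [hxV, hxV.1]
  obtain rfl : H' = H := by
    by_contra hne
    exact (hW.disjoint H' hH' H hH hne).notMem_of_mem_left hxW hx
  rcases hV with rfl | rfl
  · rfl
  · exact absurd (subset_closure hx) hxV.2

theorem exists_mem_expansionFamily_xor (hW : IsDisjointOpenExpansion ℋ W) {H : Set X}
    (hH : H ∈ ℋ) {x y : X} (hx : x ∈ H) (hy : y ∉ closure H) :
    ∃ V ∈ expansionFamily ℋ W, Xor' (x ∈ V) (y ∈ V) := by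
  have mem : ∀ {V}, V = W H ∨ V = W H \ closure H → V ∈ expansionFamily ℋ W := fun hV =>
    mem_biUnion hH hV
  by_cases hyW : y ∈ W H
  · exact ⟨_, mem (.inr rfl), .inr ⟨⟨hyW, hy⟩, fun hxV => hxV.2 (subset_closure hx)⟩⟩
  · exact ⟨_, mem (.inl rfl), .inl ⟨hW.subset H hH hx, hyW⟩⟩

end IsDisjointOpenExpansion

end

theorem descriptive_compact_isGruenhage_general
    {K : Type*} [TopologicalSpace K] [T2Space K]
    (ℋ : ℕ → Set (Set K))
    (hiso : ∀ n, IsIsolatedFamily (ℋ n))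
    (hnet : IsNetwork (⋃ n, ℋ n)) :
    IsGruenhage K := by
  choose W hW using fun n => (hiso n).exists_isDisjointOpenExpansion
  refine ⟨fun n => expansionFamily (ℋ n) (W n),
    fun n _ hV => (hW n).isOpen_of_mem_expansionFamily hV, fun x y hxy => ?_⟩
  obtain ⟨H, hH, hxH, hyH⟩ := hnet.exists_mem_notMem_closure hxy
  obtain ⟨n, hHn⟩ := mem_iUnion.1 hH
  exact ⟨n, (hW n).exists_mem_expansionFamily_xor hHn hxH hyH,
    .inl ((finite_singleton _).subset ((hW n).setOf_mem_expansionFamily_subset hHn hxH))⟩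

/-- Every descriptive compact Hausdorff space (one admitting a σ-isolated network)
is Gruenhage. -/
theorem descriptive_compact_isGruenhage
    {K : Type*} [TopologicalSpace K] [CompactSpace K] [T2Space K]
    (ℋ : ℕ → Set (Set K))
    (hiso : ∀ n, IsIsolatedFamily (ℋ n))
    (hnet : IsNetwork (⋃ n, ℋ n)) :
    IsGruenhage K :=
  descriptive_compact_isGruenhage_general ℋ hiso hnet
end

section
/- Let X be a topological space whose cardinality is at most the continuum 2^ℵ₀. Then X is Gruenhage if and only if there is a countable family of open subsets of X that separates points (for all distinct x, y ∈ X some member of the family contains exactly one of x and y). -/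
open Set Cardinal

theorem exists_injOn_set_nat {β : Type*} {s : Set β} (hs : #s ≤ 𝔠) :
    ∃ c : β → Set ℕ, InjOn c s := by
  classical
  obtain ⟨e⟩ : Nonempty (s ↪ Set ℕ) :=
    lift_mk_le'.1 (by rwa [lift_uzero, mk_set_nat, lift_continuum])
  refine ⟨fun b => if h : b ∈ s then e ⟨b, h⟩ else ∅, fun a ha b hb hab => ?_⟩
  simp only [dif_pos ha, dif_pos hb] at hab
  exact congrArg Subtype.val (e.injective hab)

theorem HasCountableSeparatingOn.exists_seq_xor {X : Type*} {p : Set X → Prop} {t : Set X}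
    (h : HasCountableSeparatingOn X p t) (hp : p ∅) :
    ∃ U : ℕ → Set X, (∀ n, p (U n)) ∧ ∀ x ∈ t, ∀ y ∈ t, x ≠ y → ∃ n, Xor' (x ∈ U n) (y ∈ U n) := by
  obtain ⟨S, hSc, hSp, hS⟩ := h
  obtain ⟨U, hU⟩ := (hSc.insert ∅).exists_eq_range (insert_nonempty _ _)
  refine ⟨U, fun n => ?_, fun x hx y hy hxy => ?_⟩
  · rcases (hU ▸ mem_range_self n : U n ∈ insert ∅ S) with h | h
    · exact h ▸ hp
    · exact hSp _ h
  · by_contra! hU'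
    refine hxy (hS x hx y hy fun s hs => ?_)
    obtain ⟨n, rfl⟩ : s ∈ range U := hU ▸ mem_insert_of_mem ∅ hs
    exact (not_xor _ _).1 (hU' n)

namespace Gruenhage

section Levels

variable {X α : Type*} (F : X → Set α)

/-- For `F = familyAt 𝒰` and finite `𝒜 ⊆ 𝒰`, the set `{z | 𝒜 ⊆ F z}` is `⋂₀ 𝒜`. -/
def above (𝔄 : Set (Set α)) : Set X := {z | ∃ 𝒜 ∈ 𝔄, 𝒜 ⊆ F z}

def level (k : ℕ) : Set (Set α) := {𝒜 ∈ range F | 𝒜.encard = k}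

def levelSucc (k : ℕ) : Set (Set α) := {𝒜 | 𝒜.encard = k + 1 ∧ ∃ ℬ ∈ level F k, ℬ ⊆ 𝒜}

def levelBit (c : Set α → Set ℕ) (k m : ℕ) : Set (Set α) := {𝒜 ∈ level F k | m ∈ c 𝒜}

def levelCollections (c : Set α → Set ℕ) : Set (Set (Set α)) :=
  range (level F) ∪ range (levelSucc F) ∪ range (Function.uncurry (levelBit F c))

variable {F} {x y : X} {k : ℕ}

theorem mem_above_level (hx : (F x).encard = k) : x ∈ above F (level F k) :=
  ⟨F x, ⟨mem_range_self x, hx⟩, subset_rfl⟩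

theorem eq_of_mem_level_of_subset {𝒜 : Set α} (h𝒜 : 𝒜 ∈ level F k) (hx : (F x).encard = k)
    (hsub : 𝒜 ⊆ F x) : 𝒜 = F x :=
  (finite_of_encard_eq_coe h𝒜.2).eq_of_subset_of_encard_le hsub (hx.trans h𝒜.2.symm).le

theorem notMem_above_levelSucc (hx : (F x).encard = k) : x ∉ above F (levelSucc F k) := by
  rintro ⟨𝒜, ⟨h𝒜, -⟩, hsub⟩
  have hle := encard_le_encard hsub
  rw [h𝒜, hx] at hle
  exact absurd hle (by norm_cast; omega)

theorem mem_above_levelSucc {𝒜 : Set α} (h𝒜 : 𝒜 ∈ level F k) (hss : 𝒜 ⊂ F y) :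
    y ∈ above F (levelSucc F k) := by
  obtain ⟨a, hay, ha𝒜⟩ := exists_of_ssubset hss
  refine ⟨insert a 𝒜, ⟨?_, 𝒜, h𝒜, subset_insert a 𝒜⟩, insert_subset hay hss.subset⟩
  rw [encard_insert_of_notMem ha𝒜, h𝒜.2]

theorem mem_above_levelBit_iff {c : Set α → Set ℕ} {m : ℕ} (hx : (F x).encard = k) :
    x ∈ above F (levelBit F c k m) ↔ m ∈ c (F x) := by
  constructor
  · rintro ⟨𝒜, ⟨h𝒜, hm⟩, hsub⟩
    rwa [← eq_of_mem_level_of_subset h𝒜 hx hsub]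
  · exact fun hm => ⟨F x, ⟨⟨mem_range_self x, hx⟩, hm⟩, subset_rfl⟩

theorem levelCollections_countable (c : Set α → Set ℕ) : (levelCollections F c).Countable :=
  ((countable_range _).union (countable_range _)).union (countable_range _)

theorem finite_of_mem_of_mem_levelCollections {c : Set α → Set ℕ} {𝔄 : Set (Set α)}
    {𝒜 : Set α} (h𝔄 : 𝔄 ∈ levelCollections F c) (h𝒜 : 𝒜 ∈ 𝔄) : 𝒜.Finite := by
  rcases h𝔄 with (⟨k, rfl⟩ | ⟨k, rfl⟩) | ⟨⟨k, m⟩, rfl⟩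
  · exact finite_of_encard_eq_coe h𝒜.2
  · exact finite_of_encard_le_coe (k := k + 1) (by rw [h𝒜.1]; norm_cast)
  · exact finite_of_encard_eq_coe h𝒜.1.2

theorem exists_mem_levelCollections_not_iff {c : Set α → Set ℕ} (hc : InjOn c (range F))
    (hx : (F x).Finite) (hxy : F x ≠ F y) :
    ∃ 𝔄 ∈ levelCollections F c, ¬(x ∈ above F 𝔄 ↔ y ∈ above F 𝔄) := by
  obtain ⟨k, hk⟩ := hx.exists_encard_eq_coe
  by_cases hy : y ∈ above F (level F k)
  · obtain ⟨𝒜, h𝒜, hsub⟩ := hy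
    rcases hsub.eq_or_ssubset with rfl | hss
    · obtain ⟨m, hm⟩ : ∃ m, ¬(m ∈ c (F x) ↔ m ∈ c (F y)) := by
        by_contra! h
        exact hxy (hc (mem_range_self x) (mem_range_self y) (Set.ext h))
      refine ⟨levelBit F c k m, Or.inr ⟨(k, m), rfl⟩, ?_⟩
      rwa [mem_above_levelBit_iff hk, mem_above_levelBit_iff h𝒜.2]
    · exact ⟨levelSucc F k, Or.inl (Or.inr ⟨k, rfl⟩),
        fun h => notMem_above_levelSucc hk (h.2 (mem_above_levelSucc h𝒜 hss))⟩
  · exact ⟨level F k, Or.inl (Or.inl ⟨k, rfl⟩), fun h => hy (h.1 (mem_above_level hk))⟩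

theorem exists_countable_finite_separating (hF : #(range F) ≤ 𝔠) :
    ∃ 𝔖 : Set (Set (Set α)), 𝔖.Countable ∧ (∀ 𝔄 ∈ 𝔖, ∀ 𝒜 ∈ 𝔄, 𝒜.Finite) ∧
      ∀ x y, (F x).Finite → F x ≠ F y → ∃ 𝔄 ∈ 𝔖, ¬(x ∈ above F 𝔄 ↔ y ∈ above F 𝔄) := by
  obtain ⟨c, hc⟩ := exists_injOn_set_nat hF
  exact ⟨levelCollections F c, levelCollections_countable c,
    fun _ h𝔄 _ => finite_of_mem_of_mem_levelCollections h𝔄,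
    fun _ _ hx hxy => exists_mem_levelCollections_not_iff hc hx hxy⟩

end Levels

section FamilyAt

variable {X : Type*} {𝒰 : Set (Set X)}

def familyAt (𝒰 : Set (Set X)) (x : X) : Set (Set X) := {U ∈ 𝒰 | x ∈ U}

theorem familyAt_ne_of_xor {U : Set X} {x y : X} (hU : U ∈ 𝒰) (h : Xor' (x ∈ U) (y ∈ U)) :
    familyAt 𝒰 x ≠ familyAt 𝒰 y := by
  intro heq
  have hiff : U ∈ familyAt 𝒰 x ↔ U ∈ familyAt 𝒰 y := by rw [heq]
  simp only [familyAt, mem_sep_iff, hU, true_and] at hiff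
  exact (xor_iff_not_iff _ _).1 h hiff

variable [TopologicalSpace X]

theorem isOpen_setOf_subset_familyAt (h𝒰 : ∀ U ∈ 𝒰, IsOpen U) {𝒜 : Set (Set X)}
    (h𝒜 : 𝒜.Finite) : IsOpen {z | 𝒜 ⊆ familyAt 𝒰 z} := by
  have hinter : {z | 𝒜 ⊆ familyAt 𝒰 z} = ⋂ U ∈ 𝒜, {z | U ∈ 𝒰 ∧ z ∈ U} := by
    ext z
    simp [familyAt, subset_def]
  rw [hinter]
  refine h𝒜.isOpen_biInter fun U _ => ?_
  by_cases hU : U ∈ 𝒰 <;> simp [hU, h𝒰 U]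

theorem isOpen_above_familyAt (h𝒰 : ∀ U ∈ 𝒰, IsOpen U) {𝔄 : Set (Set (Set X))}
    (h𝔄 : ∀ 𝒜 ∈ 𝔄, 𝒜.Finite) : IsOpen (above (familyAt 𝒰) 𝔄) :=
  isOpen_iff_forall_mem_open.2 fun _ ⟨𝒜, h𝒜, hz⟩ =>
    ⟨_, fun _ hz' => ⟨𝒜, h𝒜, hz'⟩, isOpen_setOf_subset_familyAt h𝒰 (h𝔄 𝒜 h𝒜), hz⟩

end FamilyAt

end Gruenhage

open Gruenhage

section Topology

variable {X : Type*} [TopologicalSpace X]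

theorem IsGruenhage.hasCountableSeparatingOn (h : IsGruenhage X) (hX : #X ≤ 𝔠) :
    HasCountableSeparatingOn X IsOpen univ := by
  obtain ⟨𝒰, h𝒰, hsep⟩ := h
  choose 𝔖 h𝔖 hfin hsep𝔖 using fun n =>
    exists_countable_finite_separating (F := familyAt (𝒰 n)) (mk_range_le.trans hX)
  refine ⟨⋃ n, above (familyAt (𝒰 n)) '' 𝔖 n, countable_iUnion fun n => (h𝔖 n).image _, ?_, ?_⟩
  · simp only [mem_iUnion, mem_image]
    rintro _ ⟨n, 𝔄, h𝔄, rfl⟩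
    exact isOpen_above_familyAt (h𝒰 n) (hfin n 𝔄 h𝔄)
  · intro x _ y _ hS
    by_contra hxy
    have hmem : ∀ n, ∀ 𝔄 ∈ 𝔖 n, above (familyAt (𝒰 n)) 𝔄 ∈ ⋃ n, above (familyAt (𝒰 n)) '' 𝔖 n :=
      fun n 𝔄 h𝔄 => mem_iUnion.2 ⟨n, mem_image_of_mem _ h𝔄⟩
    obtain ⟨n, ⟨U, hU, hxor⟩, hx | hy⟩ := hsep x y hxy
    · obtain ⟨𝔄, h𝔄, hne⟩ := hsep𝔖 n x y hx (familyAt_ne_of_xor hU hxor)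
      exact hne (hS _ (hmem n 𝔄 h𝔄))
    · obtain ⟨𝔄, h𝔄, hne⟩ := hsep𝔖 n y x hy (familyAt_ne_of_xor hU hxor.symm)
      exact hne (hS _ (hmem n 𝔄 h𝔄)).symm

theorem isGruenhage_of_seq_separating (U : ℕ → Set X) (hU : ∀ n, IsOpen (U n))
    (hsep : ∀ x y : X, x ≠ y → ∃ n, Xor' (x ∈ U n) (y ∈ U n)) : IsGruenhage X := by
  refine ⟨fun n => {U n}, fun n V hV => (mem_singleton_iff.1 hV) ▸ hU n, fun x y hxy => ?_⟩
  obtain ⟨n, hn⟩ := hsep x y hxy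
  exact ⟨n, ⟨U n, rfl, hn⟩, Or.inl ((finite_singleton _).subset (sep_subset _ _))⟩

end Topology

/-- A space of cardinality at most the continuum is Gruenhage iff a countable family of
open sets separates its points. -/
theorem isGruenhage_iff_countable_separating
    {X : Type*} [TopologicalSpace X] (hcard : Cardinal.mk X ≤ Cardinal.continuum) :
    IsGruenhage X ↔
      ∃ U : ℕ → Set X, (∀ n, IsOpen (U n)) ∧
        ∀ x y : X, x ≠ y → ∃ n, Xor' (x ∈ U n) (y ∈ U n) := by
  refine ⟨fun h => ?_, fun ⟨U, hU, hsep⟩ => isGruenhage_of_seq_separating U hU hsep⟩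
  obtain ⟨U, hU, hsep⟩ := (h.hasCountableSeparatingOn hcard).exists_seq_xor isOpen_empty
  exact ⟨U, hU, fun x y => hsep x trivial y trivial⟩
end

section
/- The space of countable ordinals ω₁ (the first uncountable ordinal, equipped with the order topology) is not Gruenhage. In particular, for every countable family (Uₙ)_{n∈ℕ} of open subsets of ω₁ there exist distinct ordinals α, β < ω₁ such that for every n, Uₙ contains either both or neither of α and β. -/
open Set Ordinal Cardinal

theorem Monotone.exists_forall_ge_eq {ι β : Type*} [Preorder ι] [PartialOrder β] [Countable β]
    (hι : ∀ s : Set ι, s.Countable → BddAbove s) {f : ι → β} (hf : Monotone f) :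
    ∃ a, ∀ b, a ≤ b → f b = f a := by
  choose g hg using fun y : range f => y.2
  obtain ⟨a, ha⟩ := hι (range g) (countable_range g)
  refine ⟨a, fun b hab => le_antisymm ?_ (hf hab)⟩
  calc f b = f (g ⟨f b, mem_range_self b⟩) := (hg ⟨f b, mem_range_self b⟩).symm
    _ ≤ f a := hf (ha (mem_range_self _))

theorem Antitone.exists_forall_ge_eq_of_iInf_encard_ne_top {ι β : Type*} [Preorder ι]
    [Nonempty ι] {S : ι → Set β} (hS : Antitone S) (hfin : ⨅ x, (S x).encard ≠ ⊤) :
    ∃ x₀, (S x₀).encard = ⨅ x, (S x).encard ∧ ∀ x, x₀ ≤ x → S x = S x₀ := by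
  obtain ⟨x₀, hx₀⟩ := ENat.exists_eq_iInf fun x => (S x).encard
  refine ⟨x₀, hx₀, fun x hx => ?_⟩
  have hfin₀ : (S x₀).Finite := Set.encard_ne_top_iff.1 (hx₀ ▸ hfin)
  exact (hfin₀.subset (hS hx)).eq_of_subset_of_encard_le (hS hx) (hx₀ ▸ iInf_le _ x)

section Fans

variable {X : Type*} {𝒱 : Set (Set X)} {U : Set X} {x y : X}

def fan (𝒱 : Set (Set X)) (x : X) : Set (Set X) := {U ∈ 𝒱 | x ∈ U}

/-- The separation condition of `IsGruenhage` for a single family `𝒱`. -/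
def GSeparates (𝒱 : Set (Set X)) (x y : X) : Prop :=
  (∃ U ∈ 𝒱, Xor (x ∈ U) (y ∈ U)) ∧ ((fan 𝒱 x).Finite ∨ (fan 𝒱 y).Finite)

theorem not_gSeparates_of_infinite (hx : (fan 𝒱 x).Infinite) (hy : (fan 𝒱 y).Infinite) :
    ¬ GSeparates 𝒱 x y := by
  rintro ⟨-, hx' | hy'⟩
  exacts [hx hx', hy hy']

theorem not_gSeparates_of_fan_eq (h : fan 𝒱 x = fan 𝒱 y) : ¬ GSeparates 𝒱 x y := by
  rintro ⟨⟨U, hU, hxy⟩, -⟩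
  have hiff : x ∈ U ↔ y ∈ U := by
    simpa only [fan, mem_sep_iff, hU, true_and] using (congrArg (U ∈ ·) h).to_iff
  rcases hxy with ⟨hx, hy⟩ | ⟨hy, hx⟩
  exacts [hy (hiff.1 hx), hx (hiff.2 hy)]

theorem mem_iff_mem_of_not_gSeparates_singleton (h : ¬ GSeparates {U} x y) : x ∈ U ↔ y ∈ U := by
  have hfin : (fan {U} x).Finite := (finite_singleton U).subset (sep_subset _ _)
  by_contra hxy
  exact h ⟨⟨U, rfl, xor_iff_not_iff _ _ |>.2 hxy⟩, Or.inl hfin⟩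

variable [LinearOrder X] {γ γ' γ₀ x' z : X}

def fanIoc (𝒱 : Set (Set X)) (γ x : X) : Set (Set X) := {U ∈ 𝒱 | Ioc γ x ⊆ U}

theorem fanIoc_subset_fanIoc (hγ : γ ≤ γ') (hx : x' ≤ x) : fanIoc 𝒱 γ x ⊆ fanIoc 𝒱 γ' x' :=
  fun _ hU => ⟨hU.1, (Ioc_subset_Ioc hγ hx).trans hU.2⟩

theorem fanIoc_subset_fan (h : γ < x) : fanIoc 𝒱 γ x ⊆ fan 𝒱 x :=
  fun _ hU => ⟨hU.1, hU.2 ⟨h, le_rfl⟩⟩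

theorem exists_forall_fanIoc_eventually_eq
    (hm : ∀ γ, γ₀ ≤ γ → ⨅ x, (fanIoc 𝒱 γ x).encard = ⨅ x, (fanIoc 𝒱 γ₀ x).encard)
    (hfin : ⨅ x, (fanIoc 𝒱 γ₀ x).encard ≠ ⊤) :
    ∃ J, ∀ γ, γ₀ ≤ γ → ∃ x₀, ∀ x, x₀ ≤ x → fanIoc 𝒱 γ x = J := by
  have : Nonempty X := ⟨γ₀⟩
  have hanti (γ : X) : Antitone (fanIoc 𝒱 γ) := fun _ _ hx => fanIoc_subset_fanIoc le_rfl hx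
  obtain ⟨x₀, hx₀, hJ⟩ := (hanti γ₀).exists_forall_ge_eq_of_iInf_encard_ne_top hfin
  refine ⟨fanIoc 𝒱 γ₀ x₀, fun γ hγ => ?_⟩
  obtain ⟨x₁, hx₁, hγx₁⟩ := (hanti γ).exists_forall_ge_eq_of_iInf_encard_ne_top (hm γ hγ ▸ hfin)
  refine ⟨x₁, fun x hx => (hγx₁ x hx).trans ?_⟩
  have hsub : fanIoc 𝒱 γ₀ x₀ ⊆ fanIoc 𝒱 γ x₁ := by
    rw [← hJ _ (le_max_left x₀ x₁), ← hγx₁ _ (le_max_right x₀ x₁)]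
    exact fanIoc_subset_fanIoc hγ le_rfl
  have hfin₀ : (fanIoc 𝒱 γ₀ x₀).Finite := encard_ne_top_iff.1 (hx₀ ▸ hfin)
  exact (hfin₀.eq_of_subset_of_encard_le hsub (by rw [hx₁, hx₀, hm γ hγ])).symm

variable [TopologicalSpace X] [OrderTopology X]

theorem exists_mem_fanIoc_of_mem_fan (h𝒱 : ∀ U ∈ 𝒱, IsOpen U) (hU : U ∈ fan 𝒱 z)
    (hγ₀ : γ₀ < z) : ∃ γ, γ₀ ≤ γ ∧ γ < z ∧ U ∈ fanIoc 𝒱 γ z := by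
  obtain ⟨γ, ⟨hγ₀γ, hγz⟩, hγU⟩ :=
    exists_Ioc_subset_of_mem_nhds' ((h𝒱 U hU.1).mem_nhds hU.2) hγ₀
  exact ⟨γ, hγ₀γ, hγz, hU.1, hγU⟩

theorem fan_eq_of_forall_fanIoc_eq {J : Set (Set X)} {e : X → X} (h𝒱 : ∀ U ∈ 𝒱, IsOpen U)
    (he : ∀ γ, γ₀ ≤ γ → ∀ x, e γ ≤ x → fanIoc 𝒱 γ x = J) (hz : γ₀ < z)
    (hcl : ∀ γ < z, e γ < z) : fan 𝒱 z = J := by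
  refine Subset.antisymm (fun U hU => ?_) ?_
  · obtain ⟨γ, hγ₀γ, hγz, hγU⟩ := exists_mem_fanIoc_of_mem_fan h𝒱 hU hz
    exact he γ hγ₀γ z (hcl γ hγz).le ▸ hγU
  · exact he γ₀ le_rfl z (hcl γ₀ hz).le ▸ fanIoc_subset_fan hz

end Fans

universe u

abbrev CountableOrdinal : Type (u + 1) := Iio (ω₁ : Ordinal.{u})

namespace CountableOrdinal

theorem exists_forall_lt_of_countable {s : Set CountableOrdinal} (hs : s.Countable) :
    ∃ x : CountableOrdinal, ∀ y ∈ s, y < x := by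
  have : Countable s := hs.to_subtype
  have hsup : ⨆ y : s, (y : Ordinal) < ω₁ := iSup_lt_omega_one fun y => y.1.2
  refine ⟨⟨_, (isSuccLimit_omega 1).add_one_lt hsup⟩, fun y hy => ?_⟩
  show (y : Ordinal) < _
  exact Order.lt_add_one_iff.2 (Ordinal.le_iSup (fun y : s => (y : Ordinal)) ⟨y, hy⟩)

theorem countable_Iio (x : CountableOrdinal) : (Iio x).Countable := by
  have h : (Iio (x : Ordinal)).Countable := by
    rw [← le_aleph0_iff_set_countable, Cardinal.mk_Iio_ordinal, lift_le_aleph0]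
    exact lt_aleph_one_iff.1 (lt_omega_iff_card_lt.1 x.2)
  exact h.preimage Subtype.val_injective

theorem exists_gt_forall_apply_lt_of_lt (f : ℕ → CountableOrdinal → CountableOrdinal)
    (δ : CountableOrdinal) :
    ∃ α, δ < α ∧ ∀ n, ∀ γ < α, f n γ < α := by
  have hbound (β : CountableOrdinal) : ∃ β', β < β' ∧ ∀ n, ∀ γ < β, f n γ < β' := by
    obtain ⟨β', hβ'⟩ := exists_forall_lt_of_countable
      (((countable_iUnion fun n => (countable_Iio β).image (f n))).insert β)
    exact ⟨β', hβ' _ (mem_insert _ _), fun n γ hγ =>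
      hβ' _ (mem_insert_of_mem _ (mem_iUnion.2 ⟨n, mem_image_of_mem _ hγ⟩))⟩
  choose g hg_gt hg using hbound
  set a : ℕ → CountableOrdinal := fun k => g^[k] δ
  have ha_succ (k : ℕ) : a (k + 1) = g (a k) := Function.iterate_succ_apply' g k δ
  have ha_le (k : ℕ) : (a k : Ordinal) ≤ ⨆ k, (a k : Ordinal) :=
    Ordinal.le_iSup (fun k => (a k : Ordinal)) k
  refine ⟨⟨⨆ k, (a k : Ordinal), iSup_lt_omega_one fun k => (a k).2⟩, ?_, fun n γ hγ => ?_⟩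
  · exact (hg_gt δ).trans_le (ha_le 1)
  · obtain ⟨k, hk⟩ := Ordinal.lt_iSup_iff.1 (show (γ : Ordinal) < _ from hγ)
    have : f n γ < a (k + 1) := ha_succ k ▸ hg (a k) n γ hk
    exact this.trans_le (ha_le (k + 1))

theorem bddAbove_of_countable {s : Set CountableOrdinal} (hs : s.Countable) : BddAbove s :=
  let ⟨x, hx⟩ := exists_forall_lt_of_countable hs
  ⟨x, fun y hy => (hx y hy).le⟩

theorem exists_forall_not_gSeparates (𝒱 : Set (Set CountableOrdinal)) (h𝒱 : ∀ U ∈ 𝒱, IsOpen U) :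
    ∃ (t : CountableOrdinal) (e : CountableOrdinal → CountableOrdinal), ∀ z w, t < z → t < w →
      (∀ γ < z, e γ < z) → (∀ γ < w, e γ < w) → ¬ GSeparates 𝒱 z w := by
  set m : CountableOrdinal → ℕ∞ := fun γ => ⨅ x, (fanIoc 𝒱 γ x).encard
  have hm : Monotone m := fun _ _ h =>
    iInf_mono fun _ => encard_mono (fanIoc_subset_fanIoc h le_rfl)
  obtain ⟨γ₀, hγ₀⟩ := hm.exists_forall_ge_eq fun s hs => bddAbove_of_countable hs
  by_cases htop : m γ₀ = ⊤
  · have hinf (z : CountableOrdinal) (hz : γ₀ < z) : (fan 𝒱 z).Infinite := by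
      refine (encard_eq_top_iff.1 ?_).mono (fanIoc_subset_fan hz)
      exact eq_top_iff.2 (htop ▸ iInf_le _ z)
    exact ⟨γ₀, id, fun z w hz hw _ _ => not_gSeparates_of_infinite (hinf z hz) (hinf w hw)⟩
  · obtain ⟨J, hJ⟩ := exists_forall_fanIoc_eventually_eq hγ₀ htop
    choose! e he using hJ
    exact ⟨γ₀, e, fun z w hz hw hcz hcw => not_gSeparates_of_fan_eq
      ((fan_eq_of_forall_fanIoc_eq h𝒱 he hz hcz).trans
        (fan_eq_of_forall_fanIoc_eq h𝒱 he hw hcw).symm)⟩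

theorem exists_ne_forall_not_gSeparates (𝒰 : ℕ → Set (Set CountableOrdinal))
    (h𝒰 : ∀ n, ∀ U ∈ 𝒰 n, IsOpen U) : ∃ α β, α ≠ β ∧ ∀ n, ¬ GSeparates (𝒰 n) α β := by
  choose t e he using fun n => exists_forall_not_gSeparates (𝒰 n) (h𝒰 n)
  obtain ⟨δ, hδ⟩ := exists_forall_lt_of_countable (countable_range t)
  obtain ⟨α, hδα, hα⟩ := exists_gt_forall_apply_lt_of_lt e δ
  obtain ⟨β, hαβ, hβ⟩ := exists_gt_forall_apply_lt_of_lt e α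
  have ht (n : ℕ) : t n < α := (hδ _ (mem_range_self n)).trans hδα
  exact ⟨α, β, hαβ.ne, fun n => he n α β (ht n) ((ht n).trans hαβ) (hα n) (hβ n)⟩

end CountableOrdinal

/-- The space `ω₁` of countable ordinals (with its interval topology) is not Gruenhage;
in particular no countable family of open subsets of `ω₁` separates its points. -/
theorem omega1_not_isGruenhage :
    ¬ IsGruenhage {o : Ordinal.{0} // o < (Cardinal.aleph 1).ord} ∧
    ∀ U : ℕ → Set {o : Ordinal.{0} // o < (Cardinal.aleph 1).ord},
      (∀ n, IsOpen (U n)) →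
      ∃ α β : {o : Ordinal.{0} // o < (Cardinal.aleph 1).ord},
        α ≠ β ∧ ∀ n, (α ∈ U n ↔ β ∈ U n) := by
  rw [Cardinal.ord_aleph]
  refine ⟨fun ⟨𝒰, h𝒰, hsep⟩ => ?_, fun U hU => ?_⟩
  · obtain ⟨α, β, hne, h⟩ := CountableOrdinal.exists_ne_forall_not_gSeparates 𝒰 h𝒰
    obtain ⟨n, hn⟩ := hsep α β hne
    exact h n hn
  · obtain ⟨α, β, hne, h⟩ :=
      CountableOrdinal.exists_ne_forall_not_gSeparates (fun n => {U n})
        fun n _ hV => mem_singleton_iff.1 hV ▸ hU n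
    exact ⟨α, β, hne, fun n => mem_iff_mem_of_not_gSeparates_singleton (h n)⟩
end

section
/- Let X and Y be Hausdorff topological spaces, let X be Gruenhage, and let f : X → Y be a perfect surjection (continuous, closed, surjective, with compact fibers f⁻¹(y) for every y ∈ Y). Then Y is Gruenhage. -/
/-!
Write `ord 𝒰 x n` for the number of members of `𝒰 n` containing `x`. It is lower semicontinuous
in `x`, so minimising lexicographically yields, in the compact set `f⁻¹{y} ∪ f⁻¹{z}`, a point `b`
whose profile `ord 𝒰 b` is minimal for the pointwise order; say `f b = z`. Points of the fibre
`K = f⁻¹{y}` with the same profile as `b` are separated from `b` at levels `n` where `ord 𝒰 b n`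
is finite, and by compactness finitely many such levels suffice. So every point `a` of `K` either
lies in one of finitely many cells `⋂ₙ ⋂₀ {U ∈ 𝒰 n | a ∈ U}` missing `b` (with `n` over these
levels), or is crowded: it lies in more than `ord 𝒰 b n` members of `𝒰 n` for one of finitely many
`n`. The union `O` of these cells and of the crowded set is open and misses `b`, so, `f` being
closed, `{w | f⁻¹{w} ⊆ O}` is an open neighbourhood of `y` missing `z`. Such sets form countably
many families, indexed by the levels with the orders of `b` there and by the number of cells, and
`y` lies in only one member of its family: a point of `K` that is not crowded lies in exactly one
cell, so the cells are forced.
-/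

open Set

section Profile

variable {X : Type*} [TopologicalSpace X]

theorem IsCompact.exists_pi_minimal_of_lowerSemicontinuous {β : Type*} [LinearOrder β]
    [WellFoundedLT β] {M : Set X} (hM : IsCompact M) (hne : M.Nonempty) (p : X → ℕ → β)
    (hp : ∀ n, LowerSemicontinuous fun x => p x n) :
    ∃ x₀ ∈ M, ∀ x ∈ M, p x ≤ p x₀ → p x = p x₀ := by
  -- `N n`: the points of `M` minimising `p · 0`, then `p · 1`, ..., then `p · (n - 1)`.
  let N : ℕ → Set X := fun n => Nat.rec M (fun m Nm => {x ∈ Nm | ∀ x' ∈ Nm, p x m ≤ p x' m}) n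
  let D : ℕ → Set X := fun n => ⋂ x' ∈ N n, {x | p x n ≤ p x' n}
  have hN_succ : ∀ n, N (n + 1) = N n ∩ D n := fun n => by
    ext x
    simp only [N, D, mem_inter_iff, mem_iInter₂, mem_ofPred_eq]
  have hD_closed : ∀ n, IsClosed (D n) := fun n =>
    isClosed_biInter fun x' _ => (hp n).isClosed_preimage (p x' n)
  have hN_anti : Antitone N :=
    antitone_nat_of_succ_le fun n => (hN_succ n).symm ▸ inter_subset_left
  have hN_ne : ∀ n, (N n).Nonempty := by
    intro n
    induction n with
    | zero => exact hne
    | succ n ih =>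
      rw [hN_succ]
      exact ⟨_, Function.argminOn_mem _ _ ih,
        mem_iInter₂.2 fun x' hx' => Function.argminOn_le (p · n) _ hx'⟩
  obtain ⟨x₀, hx₀M, hx₀D⟩ := hM.inter_iInter_nonempty D hD_closed fun u => by
    obtain ⟨x, hx⟩ := hN_ne (u.sup id + 1)
    refine ⟨x, hN_anti (Nat.zero_le (u.sup id + 1)) hx, mem_iInter₂.2 fun i hi => ?_⟩
    have hle : i + 1 ≤ u.sup id + 1 := Nat.succ_le_succ (Finset.le_sup (f := id) hi)
    exact ((hN_succ i).symm ▸ hN_anti hle hx).2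
  rw [mem_iInter] at hx₀D
  refine ⟨x₀, hx₀M, fun x hxM hle => funext fun n => (hle n).antisymm ?_⟩
  have hxN : ∀ n, x ∈ N n := by
    intro n
    induction n with
    | zero => exact hxM
    | succ n ih => exact (hN_succ n).symm ▸ ⟨ih, mem_iInter₂.2 fun x' hx' =>
        (hle n).trans (mem_iInter₂.1 (hx₀D n) x' hx')⟩
  exact mem_iInter₂.1 (hx₀D n) x (hxN n)

end Profile

namespace Gruenhage

section Members

variable {X Y : Type*}

def members (𝒰 : ℕ → Set (Set X)) (x : X) (n : ℕ) : Set (Set X) := {U ∈ 𝒰 n | x ∈ U}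

noncomputable def ord (𝒰 : ℕ → Set (Set X)) (x : X) (n : ℕ) : ℕ∞ := (members 𝒰 x n).encard

def PointSeparating (𝒰 : ℕ → Set (Set X)) : Prop :=
  ∀ x y : X, x ≠ y →
    ∃ n, (∃ U ∈ 𝒰 n, Xor (x ∈ U) (y ∈ U)) ∧ ((members 𝒰 x n).Finite ∨ (members 𝒰 y n).Finite)

variable {𝒰 : ℕ → Set (Set X)}

theorem mem_sInter_members (x : X) (n : ℕ) : x ∈ ⋂₀ members 𝒰 x n := fun _ hU => hU.2

theorem members_eq_of_mem_sInter {x x' : X} {n : ℕ} (hx' : x' ∈ ⋂₀ members 𝒰 x n)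
    (hle : ord 𝒰 x' n ≤ ord 𝒰 x n) (hfin : ord 𝒰 x n ≠ ⊤) :
    members 𝒰 x n = members 𝒰 x' n :=
  (encard_ne_top_iff.1 hfin).eq_of_subset_of_encard_le (fun U hU => ⟨hU.1, hx' U hU⟩) hle

theorem exists_level_notMem_sInter (hsep : PointSeparating 𝒰) {a b : X} (hab : a ≠ b)
    (h : ord 𝒰 a = ord 𝒰 b) : ∃ n, ord 𝒰 b n ≠ ⊤ ∧ b ∉ ⋂₀ members 𝒰 a n := by
  obtain ⟨n, ⟨U, hU, hxor⟩, hfin⟩ := hsep a b hab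
  have hfin : ord 𝒰 b n ≠ ⊤ := by
    rcases hfin with ha | hb
    · exact h ▸ encard_ne_top_iff.2 ha
    · exact encard_ne_top_iff.2 hb
  refine ⟨n, hfin, fun hb => ?_⟩
  have heq := members_eq_of_mem_sInter hb (h ▸ le_rfl) (h ▸ hfin)
  have hiff : a ∈ U ↔ b ∈ U := ⟨fun ha => (heq ▸ ⟨hU, ha⟩ : U ∈ members 𝒰 b n).2,
    fun hb => (heq.symm ▸ ⟨hU, hb⟩ : U ∈ members 𝒰 a n).2⟩
  rcases hxor with ⟨ha, hnb⟩ | ⟨hb, hna⟩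
  exacts [hnb (hiff.1 ha), hna (hiff.2 hb)]

def cell (𝒰 : ℕ → Set (Set X)) (S : Finset (ℕ × ℕ)) (x : X) : Set X :=
  ⋂ p ∈ S, ⋂₀ members 𝒰 x p.1

theorem mem_cell_self (S : Finset (ℕ × ℕ)) (x : X) : x ∈ cell 𝒰 S x :=
  mem_iInter₂.2 fun p _ => mem_sInter_members x p.1

def cells (𝒰 : ℕ → Set (Set X)) (S : Finset (ℕ × ℕ)) : Set (Set X) :=
  cell 𝒰 S '' {x | ∀ p ∈ S, ord 𝒰 x p.1 = p.2}

theorem eq_cell_of_mem_cells {S : Finset (ℕ × ℕ)} {W : Set X} {x : X} (hW : W ∈ cells 𝒰 S)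
    (hx : x ∈ W) (hle : ∀ p ∈ S, ord 𝒰 x p.1 ≤ p.2) : W = cell 𝒰 S x := by
  obtain ⟨a, ha, rfl⟩ := hW
  refine iInter₂_congr fun p hp => ?_
  rw [members_eq_of_mem_sInter (mem_iInter₂.1 hx p hp) (ha p hp ▸ hle p hp)
    (by simp [ha p hp])]

def crowded (𝒰 : ℕ → Set (Set X)) (SC : Finset (ℕ × ℕ)) : Set X :=
  ⋃ p ∈ SC, {x | (p.2 : ℕ∞) < ord 𝒰 x p.1}

theorem crowded_mono {SC SC' : Finset (ℕ × ℕ)} (h : SC ⊆ SC') :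
    crowded 𝒰 SC ⊆ crowded 𝒰 SC' :=
  biUnion_subset_biUnion_left (Finset.coe_subset.2 h)

noncomputable def ordGraph (𝒰 : ℕ → Set (Set X)) (b : X) (N : Finset ℕ) : Finset (ℕ × ℕ) :=
  (N.filter fun n => ord 𝒰 b n ≠ ⊤).image fun n => (n, (ord 𝒰 b n).toNat)

theorem mk_mem_ordGraph {b : X} {N : Finset ℕ} {n : ℕ} (hn : n ∈ N)
    (hfin : ord 𝒰 b n ≠ ⊤) : (n, (ord 𝒰 b n).toNat) ∈ ordGraph 𝒰 b N :=
  Finset.mem_image_of_mem _ (Finset.mem_filter.2 ⟨hn, hfin⟩)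

theorem mem_ordGraph {b : X} {N : Finset ℕ} {p : ℕ × ℕ} :
    p ∈ ordGraph 𝒰 b N ↔ p.1 ∈ N ∧ ord 𝒰 b p.1 = p.2 := by
  constructor
  · simp only [ordGraph, Finset.mem_image, Finset.mem_filter]
    rintro ⟨n, ⟨hn, hfin⟩, rfl⟩
    exact ⟨hn, (ENat.natCast_toNat hfin).symm⟩
  · rintro ⟨hn, hp⟩
    convert mk_mem_ordGraph hn (hp ▸ ENat.natCast_ne_top p.2)
    simp [hp]

theorem ordGraph_mono {b : X} {N N' : Finset ℕ} (h : N ⊆ N') :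
    ordGraph 𝒰 b N ⊆ ordGraph 𝒰 b N' := fun _ hp =>
  mem_ordGraph.2 ⟨h (mem_ordGraph.1 hp).1, (mem_ordGraph.1 hp).2⟩

theorem notMem_crowded_ordGraph (b : X) (N : Finset ℕ) :
    b ∉ crowded 𝒰 (ordGraph 𝒰 b N) := fun hb => by
  obtain ⟨p, hp, hlt⟩ := mem_iUnion₂.1 hb
  exact hlt.ne (mem_ordGraph.1 hp).2.symm

def SeparatesAt {ι : Type*} (𝒱 : ι → Set (Set Y)) (y z : Y) : Prop :=
  ∃ i, (∃ V ∈ 𝒱 i, y ∈ V ∧ z ∉ V) ∧ {V ∈ 𝒱 i | y ∈ V}.Finite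

def imageFamily (𝒰 : ℕ → Set (Set X)) (f : X → Y) :
    Finset (ℕ × ℕ) × Finset (ℕ × ℕ) × ℕ → Set (Set Y)
  | (S, SC, q) => {V | ∃ T ⊆ cells 𝒰 S, T.encard = q ∧ V = kernImage f (⋃₀ T ∪ crowded 𝒰 SC)}

theorem separatesAt_imageFamily {f : X → Y} {y : Y} {b : X} {S SC : Finset (ℕ × ℕ)}
    {T₀ : Set (Set X)} (hS : S ⊆ SC) (hT₀ : T₀ ⊆ cells 𝒰 S) (hT₀fin : T₀.Finite)
    (hb : b ∉ ⋃₀ T₀ ∪ crowded 𝒰 SC) (hcover : f ⁻¹' {y} ⊆ ⋃₀ T₀ ∪ crowded 𝒰 SC) :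
    SeparatesAt (imageFamily 𝒰 f) y (f b) := by
  set C := crowded 𝒰 SC
  set P := f ⁻¹' {y} \ C
  have hP : ∀ x ∈ P, ∀ p ∈ S, ord 𝒰 x p.1 ≤ p.2 := fun x hx p hp =>
    not_lt.1 fun h => hx.2 (mem_iUnion₂.2 ⟨p, hS hp, h⟩)
  set T := {W ∈ T₀ | (W ∩ P).Nonempty}
  -- Every cover of the fibre by cells at `S` contains `T`, since the cell at `S` containing a
  -- point of `P` is unique.
  have hT_min : ∀ T' ⊆ cells 𝒰 S, f ⁻¹' {y} ⊆ ⋃₀ T' ∪ C → T ⊆ T' := by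
    rintro T' hT' hcov W ⟨hW, x, hxW, hxP⟩
    obtain ⟨W', hW'T', hxW'⟩ := (hcov hxP.1).resolve_right hxP.2
    rwa [eq_cell_of_mem_cells (hT₀ hW) hxW (hP x hxP),
      ← eq_cell_of_mem_cells (hT' hW'T') hxW' (hP x hxP)]
  have hTfin : T.Finite := hT₀fin.subset (sep_subset _ _)
  have hTcard : (T.encard.toNat : ℕ∞) = T.encard := ENat.natCast_toNat (encard_ne_top_iff.2 hTfin)
  have hcovT : f ⁻¹' {y} ⊆ ⋃₀ T ∪ C := fun x hx => by
    by_cases hxC : x ∈ C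
    · exact Or.inr hxC
    · obtain ⟨W, hW, hxW⟩ := (hcover hx).resolve_right hxC
      exact Or.inl ⟨W, ⟨hW, x, hxW, hx, hxC⟩, hxW⟩
  refine ⟨(S, SC, T.encard.toNat), ⟨_, ⟨T, (sep_subset _ _).trans hT₀,
    hTcard.symm, rfl⟩, fun x hx => hcovT hx, ?_⟩, ?_⟩
  · exact fun h => hb ((union_subset_union_left C (sUnion_mono (sep_subset _ _))) (h rfl))
  · refine (finite_singleton (kernImage f (⋃₀ T ∪ C))).subset ?_
    rintro _ ⟨⟨T', hT', hcard, rfl⟩, hy⟩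
    have hTT' : T = T' := hTfin.eq_of_subset_of_encard_le (hT_min T' hT' fun x hx => hy hx)
      (by rw [hcard, hTcard])
    rw [hTT', mem_singleton_iff]

end Members

section Topology

variable {X Y : Type*} [TopologicalSpace X] {𝒰 : ℕ → Set (Set X)}

theorem lowerSemicontinuous_ord (h𝒰 : ∀ n, ∀ U ∈ 𝒰 n, IsOpen U) (n : ℕ) :
    LowerSemicontinuous fun x => ord 𝒰 x n := by
  intro x c hc
  obtain ⟨t, hts, htc⟩ := exists_subset_encard_eq (Order.add_one_le_of_lt hc)
  have htfin : t.Finite := finite_of_encard_eq_coe (k := c.toNat + 1) <| by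
    rw [htc, ENat.natCast_add, ENat.natCast_toNat hc.ne_top, ENat.natCast_one]
  refine Filter.mem_of_superset
    ((htfin.isOpen_sInter fun U hU => h𝒰 n U (hts hU).1).mem_nhds fun U hU => (hts hU).2)
    fun x' hx' => ?_
  calc c < c + 1 := ENat.lt_add_one_iff hc.ne_top |>.2 le_rfl
    _ = t.encard := htc.symm
    _ ≤ ord 𝒰 x' n := encard_mono fun U hU => ⟨(hts hU).1, hx' U hU⟩

theorem isClosed_setOf_ord_le (h𝒰 : ∀ n, ∀ U ∈ 𝒰 n, IsOpen U) (b : X) :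
    IsClosed {a | ord 𝒰 a ≤ ord 𝒰 b} := by
  simp only [Pi.le_def, ofPred_forall]
  exact isClosed_iInter fun n => (lowerSemicontinuous_ord h𝒰 n).isClosed_preimage _

theorem isOpen_sInter_members (h𝒰 : ∀ n, ∀ U ∈ 𝒰 n, IsOpen U) {x : X} {n : ℕ}
    (hfin : ord 𝒰 x n ≠ ⊤) : IsOpen (⋂₀ members 𝒰 x n) :=
  (encard_ne_top_iff.1 hfin).isOpen_sInter fun U hU => h𝒰 n U hU.1

theorem isOpen_of_mem_cells (h𝒰 : ∀ n, ∀ U ∈ 𝒰 n, IsOpen U) {S : Finset (ℕ × ℕ)} {W : Set X}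
    (hW : W ∈ cells 𝒰 S) : IsOpen W := by
  obtain ⟨a, ha, rfl⟩ := hW
  exact isOpen_biInter_finset fun p hp => isOpen_sInter_members h𝒰 (by simp [ha p hp])

theorem isOpen_crowded (h𝒰 : ∀ n, ∀ U ∈ 𝒰 n, IsOpen U) (SC : Finset (ℕ × ℕ)) :
    IsOpen (crowded 𝒰 SC) :=
  isOpen_biUnion fun p _ => (lowerSemicontinuous_ord h𝒰 p.1).isOpen_preimage _

theorem exists_levels_avoiding (h𝒰 : ∀ n, ∀ U ∈ 𝒰 n, IsOpen U) (hsep : PointSeparating 𝒰)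
    {D : Set X} {b : X} (hD : IsCompact D) (hb : b ∉ D) (hDb : ∀ a ∈ D, ord 𝒰 a = ord 𝒰 b) :
    ∃ N : Finset ℕ, ∀ a ∈ D, b ∉ cell 𝒰 (ordGraph 𝒰 b N) a := by
  choose! n hfin hnot using fun a (ha : a ∈ D) =>
    exists_level_notMem_sInter hsep (ne_of_mem_of_not_mem ha hb) (hDb a ha)
  obtain ⟨t, htD, hDt⟩ := hD.elim_nhds_subcover (fun a => ⋂₀ members 𝒰 a (n a)) fun a ha =>
    (isOpen_sInter_members h𝒰 (hDb a ha ▸ hfin a ha)).mem_nhds (mem_sInter_members a (n a))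
  refine ⟨t.image n, fun a ha hba => ?_⟩
  obtain ⟨a', ha't, haa'⟩ := mem_iUnion₂.1 (hDt ha)
  have ha'D := htD a' ha't
  have hpair : (n a', (ord 𝒰 b (n a')).toNat) ∈ ordGraph 𝒰 b (t.image n) :=
    mk_mem_ordGraph (Finset.mem_image_of_mem n ha't) (hfin a' ha'D)
  -- `a` and `a'` lie in the same members of `𝒰 (n a')`, so `b` would not be separated from `a'`.
  have heq : members 𝒰 a' (n a') = members 𝒰 a (n a') :=
    members_eq_of_mem_sInter haa' (by rw [hDb a ha, hDb a' ha'D])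
      (hDb a' ha'D ▸ hfin a' ha'D)
  exact hnot a' ha'D (heq ▸ mem_iInter₂.1 hba _ hpair)

theorem exists_crowded_cover (h𝒰 : ∀ n, ∀ U ∈ 𝒰 n, IsOpen U) {L : Set X} {b : X}
    (hL : IsCompact L) (hLb : ∀ x ∈ L, ¬ord 𝒰 x ≤ ord 𝒰 b) :
    ∃ u : Finset ℕ, L ⊆ crowded 𝒰 (ordGraph 𝒰 b u) := by
  choose! m hm using fun x (hx : x ∈ L) => by
    simpa only [Pi.le_def, not_forall, not_le] using hLb x hx
  obtain ⟨t, htL, hLt⟩ := hL.elim_nhds_subcover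
    (fun x => {x' | ord 𝒰 b (m x) < ord 𝒰 x' (m x)}) fun x hx =>
      ((lowerSemicontinuous_ord h𝒰 (m x)).isOpen_preimage _).mem_nhds (hm x hx)
  refine ⟨t.image m, fun x hx => ?_⟩
  obtain ⟨x', hx't, hxx'⟩ := mem_iUnion₂.1 (hLt hx)
  have hfin : ord 𝒰 b (m x') ≠ ⊤ := (hm x' (htL x' hx't)).ne_top
  refine mem_iUnion₂.2 ⟨(m x', (ord 𝒰 b (m x')).toNat), ?_, ?_⟩
  · exact mk_mem_ordGraph (Finset.mem_image_of_mem m hx't) hfin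
  · simpa only [mem_ofPred_eq, ENat.natCast_toNat hfin] using hxx'

theorem exists_cell_cover (h𝒰 : ∀ n, ∀ U ∈ 𝒰 n, IsOpen U) (hsep : PointSeparating 𝒰)
    {K : Set X} {b : X} (hK : IsCompact K) (hb : b ∉ K)
    (hmin : ∀ a ∈ K, ord 𝒰 a ≤ ord 𝒰 b → ord 𝒰 a = ord 𝒰 b) :
    ∃ S SC : Finset (ℕ × ℕ), S ⊆ SC ∧ ∃ T ⊆ cells 𝒰 S, T.Finite ∧
      b ∉ ⋃₀ T ∪ crowded 𝒰 SC ∧ K ⊆ ⋃₀ T ∪ crowded 𝒰 SC := by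
  set D := K ∩ {a | ord 𝒰 a ≤ ord 𝒰 b}
  have hD : IsCompact D := hK.inter_right (isClosed_setOf_ord_le h𝒰 b)
  have hDb : ∀ a ∈ D, ord 𝒰 a = ord 𝒰 b := fun a ha => hmin a ha.1 ha.2
  obtain ⟨N, hN⟩ := exists_levels_avoiding h𝒰 hsep hD (fun h => hb h.1) hDb
  set S := ordGraph 𝒰 b N
  have hcell : ∀ a ∈ D, cell 𝒰 S a ∈ cells 𝒰 S := fun a ha =>
    ⟨a, fun p hp => hDb a ha ▸ (mem_ordGraph.1 hp).2, rfl⟩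
  obtain ⟨B, hBD, hDB⟩ := hD.elim_nhds_subcover (cell 𝒰 S) fun a ha =>
    (isOpen_of_mem_cells h𝒰 (hcell a ha)).mem_nhds (mem_cell_self S a)
  obtain ⟨u, hu⟩ := exists_crowded_cover h𝒰
    (hK.diff (isOpen_biUnion fun a ha => isOpen_of_mem_cells h𝒰 (hcell a (hBD a ha))))
    fun x hx hle => hx.2 (hDB ⟨hx.1, hle⟩)
  refine ⟨S, ordGraph 𝒰 b (N ∪ u), ordGraph_mono Finset.subset_union_left,
    cell 𝒰 S '' B, ?_, B.finite_toSet.image _, ?_, fun x hx => ?_⟩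
  · rintro _ ⟨a, ha, rfl⟩
    exact hcell a (hBD a ha)
  · rintro (⟨_, ⟨a, ha, rfl⟩, hba⟩ | hb)
    exacts [hN a (hBD a ha) hba, notMem_crowded_ordGraph b _ hb]
  · by_cases hxB : x ∈ ⋃ a ∈ B, cell 𝒰 S a
    · obtain ⟨a, ha, hxa⟩ := mem_iUnion₂.1 hxB
      exact Or.inl ⟨_, ⟨a, ha, rfl⟩, hxa⟩
    · exact Or.inr (crowded_mono (ordGraph_mono Finset.subset_union_right) (hu ⟨hx, hxB⟩))

theorem separatesAt_imageFamily_of_minimal (h𝒰 : ∀ n, ∀ U ∈ 𝒰 n, IsOpen U)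
    (hsep : PointSeparating 𝒰) {f : X → Y} {y : Y} {b : X} (hK : IsCompact (f ⁻¹' {y}))
    (hb : f b ≠ y) (hmin : ∀ a ∈ f ⁻¹' {y}, ord 𝒰 a ≤ ord 𝒰 b → ord 𝒰 a = ord 𝒰 b) :
    SeparatesAt (imageFamily 𝒰 f) y (f b) := by
  obtain ⟨S, SC, hS, T₀, hT₀, hT₀fin, hbT₀, hcover⟩ := exists_cell_cover h𝒰 hsep hK hb hmin
  exact separatesAt_imageFamily hS hT₀ hT₀fin hbT₀ hcover

theorem isOpen_of_mem_imageFamily [TopologicalSpace Y] (h𝒰 : ∀ n, ∀ U ∈ 𝒰 n, IsOpen U)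
    {f : X → Y} (hf : IsClosedMap f) {i} {V : Set Y} (hV : V ∈ imageFamily 𝒰 f i) : IsOpen V := by
  obtain ⟨S, SC, q⟩ := i
  obtain ⟨T, hT, -, rfl⟩ := hV
  exact isClosedMap_iff_kernImage.1 hf
    ((isOpen_sUnion fun W hW => isOpen_of_mem_cells h𝒰 (hT hW)).union (isOpen_crowded h𝒰 SC))

theorem isGruenhage_of_separatesAt [TopologicalSpace Y] {ι : Type*} [Countable ι] [Nonempty ι]
    (𝒱 : ι → Set (Set Y)) (h𝒱 : ∀ i, ∀ V ∈ 𝒱 i, IsOpen V)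
    (hsep : ∀ y z, y ≠ z → SeparatesAt 𝒱 y z ∨ SeparatesAt 𝒱 z y) : IsGruenhage Y := by
  obtain ⟨e, he⟩ := exists_surjective_nat ι
  refine ⟨𝒱 ∘ e, fun n => h𝒱 (e n), fun y z hyz => ?_⟩
  rcases hsep y z hyz with ⟨i, ⟨V, hV, hy, hz⟩, hfin⟩ | ⟨i, ⟨V, hV, hz, hy⟩, hfin⟩
  · obtain ⟨n, rfl⟩ := he i
    exact ⟨n, ⟨V, hV, Or.inl ⟨hy, hz⟩⟩, Or.inl hfin⟩
  · obtain ⟨n, rfl⟩ := he i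
    exact ⟨n, ⟨V, hV, Or.inr ⟨hz, hy⟩⟩, Or.inr hfin⟩

end Topology

end Gruenhage

open Gruenhage

theorem isGruenhage_perfect_image_general
    {X Y : Type*} [TopologicalSpace X] [TopologicalSpace Y]
    (hX : IsGruenhage X) (f : X → Y)
    (hclosed : IsClosedMap f) (hsurj : Function.Surjective f)
    (hfib : ∀ y : Y, IsCompact (f ⁻¹' {y})) :
    IsGruenhage Y := by
  obtain ⟨𝒰, h𝒰, hsep⟩ := hX
  refine isGruenhage_of_separatesAt (imageFamily 𝒰 f)
    (fun _ _ => isOpen_of_mem_imageFamily h𝒰 hclosed) fun y z hyz => ?_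
  obtain ⟨x₀, hx₀, hmin⟩ := ((hfib y).union (hfib z)).exists_pi_minimal_of_lowerSemicontinuous
    ((hsurj y).imp fun _ hx => Or.inl hx) (ord 𝒰) (lowerSemicontinuous_ord h𝒰)
  rcases hx₀ with (rfl : f x₀ = y) | (rfl : f x₀ = z)
  · exact Or.inr (separatesAt_imageFamily_of_minimal h𝒰 hsep (hfib z) hyz
      fun a ha => hmin a (Or.inr ha))
  · exact Or.inl (separatesAt_imageFamily_of_minimal h𝒰 hsep (hfib y) hyz.symm
      fun a ha => hmin a (Or.inl ha))

/-- Perfect (continuous, closed, compact-fibered) surjective images of Gruenhage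
Hausdorff spaces are Gruenhage. -/
theorem isGruenhage_perfect_image
    {X Y : Type*} [TopologicalSpace X] [TopologicalSpace Y] [T2Space X] [T2Space Y]
    (hX : IsGruenhage X) (f : X → Y)
    (hcont : Continuous f) (hclosed : IsClosedMap f) (hsurj : Function.Surjective f)
    (hfib : ∀ y : Y, IsCompact (f ⁻¹' {y})) :
    IsGruenhage Y :=
  isGruenhage_perfect_image_general hX f hclosed hsurj hfib
end

section
/- Let K be a compact Hausdorff Gruenhage space. Then there exist open sets Rₙ ⊆ K and families 𝒰ₙ of open subsets of K (n ∈ ℕ) with Rₙ ⊆ U for all U ∈ 𝒰ₙ, U ∩ V = Rₙ for distinct U, V ∈ 𝒰ₙ, and ⋃_{n∈ℕ} 𝒰ₙ separating points of K, which additionally have the following uniqueness property: whenever μ and ν are finite Borel measures on K that are inner regular with respect to compact sets (Radon) and satisfy μ(K) = ν(K) and μ(U) = ν(U) for every U ∈ ⋃_{n∈ℕ} 𝒰ₙ, then μ = ν. -/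
/-!
Let `𝒰ₙ` witness that `K` is Gruenhage. For a finite set `s` of levels put `𝒱 = ⋃_{n ∈ s} 𝒰ₙ`
and let `Rₖ` be the set of points lying in more than `k` members of `𝒱`; the sets `⋂ 𝒯 ∪ Rₖ`
(`𝒯 ⊆ 𝒱` with `k` elements) together with `Rₖ` form a Δ-system with kernel `Rₖ`. The measures
of its members determine the measure of every fiber `⋂ 𝒯 \ Rₖ = {x | trace x = 𝒯}` of the trace
map `x ↦ {U ∈ 𝒱 | x ∈ U}`, and a nonempty intersection of fibers of several levels is a fiber
of the union of these levels.

At each level only countably many fibers have positive measure, and since a fiber is relatively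
open among the points with traces of the same size, inner regularity shows that almost every point
of finite trace lies in one of them. By the Gruenhage property these countably many fibers
separate almost all points. Finally, a Lusin-type argument shows that two Radon measures agreeing
on the σ-algebra generated by countably many sets that separate the points outside a common null
set are equal: on a large compact set the coding map into `ι → Bool` is continuous, so images of
compact sets are closed.
-/

open MeasureTheory Set Filter Topology
open scoped ENNReal

section RadonUniqueness

variable {K ι : Type*} [TopologicalSpace K] [MeasurableSpace K]

theorem MeasureTheory.Measure.InnerRegular.ext_of_isCompact {μ ν : Measure K} [μ.InnerRegular]
    [ν.InnerRegular] (h : ∀ C, IsCompact C → μ C = ν C) : μ = ν :=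
  Measure.ext fun E hE => by
    simp_rw [hE.measure_eq_iSup_isCompact μ, hE.measure_eq_iSup_isCompact ν]
    exact iSup_congr fun C => iSup_congr fun _ => iSup_congr fun hC => h C hC

theorem LowerSemicontinuous.measurable_enat [OpensMeasurableSpace K] {f : K → ℕ∞}
    (hf : LowerSemicontinuous f) : Measurable f := by
  refine ENat.measurable_iff.2 fun n => ?_
  have hopen (m : ℕ∞) : MeasurableSet (f ⁻¹' Ioi m) := (hf.isOpen_preimage m).measurableSet
  cases n with
  | zero => convert (hopen 0).compl using 1; ext x; simp
  | succ j =>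
    convert (hopen j).diff (hopen (j + 1)) using 1
    ext x
    simp only [mem_preimage, mem_singleton_iff, Set.mem_sdiff, mem_Ioi, not_lt, Nat.cast_add,
      Nat.cast_one]
    rw [← ENat.add_one_le_iff (ENat.natCast_ne_top j), le_antisymm_iff, and_comm]

theorem MeasureTheory.Measure.InnerRegular.measure_eq_zero_of_forall_nhdsWithin
    {μ : Measure K} [μ.InnerRegular] {X : Set K} (hX : MeasurableSet X)
    (h : ∀ x ∈ X, ∃ t ∈ 𝓝[X] x, μ t = 0) : μ X = 0 := by
  rw [hX.measure_eq_iSup_isCompact μ, ENNReal.iSup_eq_zero]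
  refine fun C => ENNReal.iSup_eq_zero.2 fun hCX => ENNReal.iSup_eq_zero.2 fun hC => ?_
  refine hC.measure_zero_of_nhdsWithin fun x hx => ?_
  obtain ⟨t, ht, hμt⟩ := h x (hCX hx)
  exact ⟨t, nhdsWithin_mono x hCX ht, hμt⟩

theorem exists_isCompact_subset_continuousOn [OpensMeasurableSpace K] [T2Space K] [Countable ι]
    (ρ : Measure K) [IsFiniteMeasure ρ] [ρ.InnerRegular] {f : K → ι → Bool} (hf : Measurable f)
    {X : Set K} (hX : MeasurableSet X) {ε : ℝ≥0∞} (hε : ε ≠ 0) :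
    ∃ F ⊆ X, IsCompact F ∧ ContinuousOn f F ∧ ρ (X \ F) ≤ ε := by
  have hε2 : ε / 2 ≠ 0 := (ENNReal.half_pos hε).ne'
  obtain ⟨δ, hδ, hδε⟩ := ENNReal.exists_pos_sum_of_countable' hε2 (ι × Bool)
  have hlevel : ∀ p : ι × Bool, MeasurableSet {x | f x p.1 = p.2} :=
    fun p => measurableSet_eq_fun ((measurable_pi_apply p.1).comp hf) measurable_const
  choose A hAsub hA hAδ using fun p => (hlevel p).exists_isCompact_sdiff_lt
    (measure_ne_top ρ _) (hδ p).ne'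
  obtain ⟨T, hTX, hT, hTε⟩ := hX.exists_isCompact_sdiff_lt (measure_ne_top ρ X) hε2
  refine ⟨T ∩ ⋂ i, ⋃ b, A (i, b), inter_subset_left.trans hTX,
    hT.inter_right (isClosed_iInter fun i => isClosed_iUnion_of_finite fun b => (hA _).isClosed),
    continuousOn_pi.2 fun i => continuousOn_iff_isClosed.2 fun t _ => ?_, ?_⟩
  · -- on `F`, the level set `{f · i = b}` is the compact set `A (i, b)`
    refine ⟨⋃ b ∈ t, A (i, b), t.toFinite.isClosed_biUnion fun b _ => (hA _).isClosed, ?_⟩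
    ext x
    simp only [mem_inter_iff, mem_preimage, mem_iUnion, exists_prop]
    constructor
    · rintro ⟨hxt, hxF⟩
      obtain ⟨b, hb⟩ := mem_iUnion.1 (mem_iInter.1 hxF.2 i)
      exact ⟨⟨b, (show f x i = b from hAsub (i, b) hb) ▸ hxt, hb⟩, hxF⟩
    · rintro ⟨⟨b, hbt, hb⟩, hxF⟩
      exact ⟨(show f x i = b from hAsub (i, b) hb) ▸ hbt, hxF⟩
  · have hsub : X \ (T ∩ ⋂ i, ⋃ b, A (i, b)) ⊆
        (X \ T) ∪ ⋃ p : ι × Bool, {x | f x p.1 = p.2} \ A p := by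
      rintro x ⟨hxX, hxF⟩
      by_cases hxT : x ∈ T
      · obtain ⟨i, hi⟩ : ∃ i, x ∉ ⋃ b, A (i, b) := by
          simpa [hxT] using hxF
        exact Or.inr (mem_iUnion.2 ⟨(i, f x i), rfl, fun h => hi (mem_iUnion.2 ⟨_, h⟩)⟩)
      · exact Or.inl ⟨hxX, hxT⟩
    calc ρ (X \ (T ∩ ⋂ i, ⋃ b, A (i, b)))
        ≤ ρ (X \ T) + ∑' p, ρ ({x | f x p.1 = p.2} \ A p) :=
          (measure_mono hsub).trans
            ((measure_union_le _ _).trans (by gcongr; exact measure_iUnion_le _))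
      _ ≤ ε / 2 + ε / 2 :=
          add_le_add hTε.le ((ENNReal.tsum_le_tsum fun p => (hAδ p).le).trans hδε.le)
      _ = ε := ENNReal.add_halves ε

theorem MeasureTheory.Measure.ext_of_forall_finset_eq_true [Countable ι]
    {α β : Measure (ι → Bool)} [IsFiniteMeasure α]
    (h : ∀ t : Finset ι, α {g | ∀ i ∈ t, g i = true} = β {g | ∀ i ∈ t, g i = true}) :
    α = β := by
  classical
  set 𝒞 := range fun t : Finset ι => {g : ι → Bool | ∀ i ∈ t, g i = true}
  have hgen : MeasurableSpace.pi = MeasurableSpace.generateFrom 𝒞 := by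
    refine le_antisymm (iSup_le fun i => ?_) (MeasurableSpace.generateFrom_le ?_)
    · exact (@measurable_to_bool _ (MeasurableSpace.generateFrom 𝒞) (fun g => g i)
        (MeasurableSpace.measurableSet_generateFrom ⟨{i}, by ext; simp⟩)).comap_le
    · rintro _ ⟨t, rfl⟩
      measurability
  refine ext_of_generate_finite 𝒞 hgen ?_ (by rintro _ ⟨t, rfl⟩; exact h t) (by simpa using h ∅)
  rintro _ ⟨t, rfl⟩ _ ⟨t', rfl⟩ -
  refine ⟨t ∪ t', ?_⟩
  ext g
  simp only [mem_inter_iff, mem_ofPred_eq, Finset.mem_union]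
  grind

variable [OpensMeasurableSpace K] [T2Space K] {μ ν : Measure K} [IsFiniteMeasure μ]
  [IsFiniteMeasure ν] [μ.InnerRegular] [ν.InnerRegular]

theorem MeasureTheory.Measure.le_of_map_eq_of_injOn [Countable ι] {f : K → ι → Bool}
    (hf : Measurable f) (hmap : μ.map f = ν.map f) {N : Set K} (hμN : μ N = 0) (hνN : ν N = 0)
    (hinj : InjOn f Nᶜ) {C : Set K} (hC : IsCompact C) : μ C ≤ ν C := by
  refine ENNReal.le_of_forall_pos_le_add fun ε hε _ => ?_
  set M := toMeasurable (μ + ν) N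
  have hM : (μ + ν) M = 0 := by simp [M, hμN, hνN]
  obtain ⟨F, hFM, hF, hfF, hFε⟩ := exists_isCompact_subset_continuousOn (μ + ν) hf
    (measurableSet_toMeasurable _ N).compl (ENNReal.coe_ne_zero.2 hε.ne')
  have hFc : (μ + ν) Fᶜ ≤ ε := by
    calc (μ + ν) Fᶜ ≤ (μ + ν) M + (μ + ν) (Mᶜ \ F) :=
          (measure_mono fun x hx => by by_cases hxM : x ∈ M <;> simp_all).trans
            (measure_union_le _ _)
      _ ≤ ε := by rw [hM, zero_add]; exact hFε
  -- `D` is a set of the σ-algebra pulled back by `f` that agrees with `C` on `F`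
  have hB : MeasurableSet (f '' (C ∩ F)) := ((hC.inter_right hF.isClosed).image_of_continuousOn
    (hfF.mono inter_subset_right)).isClosed.measurableSet
  set D := f ⁻¹' (f '' (C ∩ F))
  have hDF : D ∩ F ⊆ C := by
    rintro z ⟨⟨w, ⟨hwC, hwF⟩, hfw⟩, hzF⟩
    have hN : ∀ x ∈ F, x ∈ Nᶜ := fun x hx h => hFM hx (subset_toMeasurable _ _ h)
    rwa [← hinj (hN w hwF) (hN z hzF) hfw]
  calc μ C ≤ μ (C ∩ F) + μ (C \ F) := measure_le_inter_add_sdiff μ C F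
    _ ≤ μ D + μ Fᶜ := add_le_add (measure_mono (subset_preimage_image f _))
        (measure_mono (sdiff_subset_compl C F))
    _ = ν D + μ Fᶜ := by rw [← Measure.map_apply hf hB, hmap, Measure.map_apply hf hB]
    _ ≤ ν (D ∩ F) + ν (D \ F) + μ Fᶜ := by gcongr; exact measure_le_inter_add_sdiff ν D F
    _ ≤ ν C + (μ + ν) Fᶜ := by
        rw [Measure.add_apply, add_assoc, add_comm (μ _)]
        gcongr
        exact sdiff_subset_compl D F
    _ ≤ ν C + ε := by gcongr

theorem MeasureTheory.Measure.ext_of_map_eq_of_injOn [Countable ι] {f : K → ι → Bool}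
    (hf : Measurable f) (hmap : μ.map f = ν.map f) {N : Set K} (hμN : μ N = 0) (hνN : ν N = 0)
    (hinj : InjOn f Nᶜ) : μ = ν :=
  InnerRegular.ext_of_isCompact fun _ hC => le_antisymm
    (le_of_map_eq_of_injOn hf hmap hμN hνN hinj hC)
    (le_of_map_eq_of_injOn hf hmap.symm hνN hμN hinj hC)

theorem MeasureTheory.Measure.ext_of_measure_biInter_eq_of_separating [Countable ι] {S : ι → Set K}
    (hS : ∀ i, MeasurableSet (S i)) (h : ∀ t : Finset ι, μ (⋂ i ∈ t, S i) = ν (⋂ i ∈ t, S i))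
    {N : Set K} (hμN : μ N = 0) (hνN : ν N = 0)
    (hsep : ∀ x ∉ N, ∀ y ∉ N, (∀ i, x ∈ S i ↔ y ∈ S i) → x = y) : μ = ν := by
  classical
  have hf : Measurable fun x i => decide (x ∈ S i) :=
    measurable_pi_iff.2 fun i => measurable_to_bool (by convert hS i; ext; simp)
  refine ext_of_map_eq_of_injOn hf (ext_of_forall_finset_eq_true fun t => ?_) hμN hνN
    fun x hx y hy hxy => hsep x hx y hy fun i => by simpa using congr_fun hxy i
  rw [Measure.map_apply hf, Measure.map_apply hf]
  · convert h t using 2 <;> ext <;> simp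
  all_goals measurability

end RadonUniqueness

namespace Gruenhage

variable {K : Type*}

def trace (𝒱 : Set (Set K)) (x : K) : Set (Set K) := {U ∈ 𝒱 | x ∈ U}

def coveredMoreThan (𝒱 : Set (Set K)) (k : ℕ) : Set K := {x | (k : ℕ∞) < (trace 𝒱 x).encard}

def deltaSystem (𝒱 : Set (Set K)) (k : ℕ) : Set (Set K) :=
  insert (coveredMoreThan 𝒱 k)
    ((fun 𝒯 => ⋂₀ 𝒯 ∪ coveredMoreThan 𝒱 k) '' {𝒯 | 𝒯 ⊆ 𝒱 ∧ 𝒯.encard = k})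

variable {𝒱 𝒯 𝒮 : Set (Set K)} {x y : K} {k : ℕ}

theorem trace_subset : trace 𝒱 x ⊆ 𝒱 := fun _ hU => hU.1

theorem subset_trace_iff (h𝒯 : 𝒯 ⊆ 𝒱) : 𝒯 ⊆ trace 𝒱 x ↔ x ∈ ⋂₀ 𝒯 :=
  ⟨fun h _ hU => (h hU).2, fun h U hU => ⟨h𝒯 hU, h U hU⟩⟩

theorem mem_iff_of_trace_eq {U : Set K} (hU : U ∈ 𝒱) (h : trace 𝒱 x = trace 𝒱 y) :
    x ∈ U ↔ y ∈ U := by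
  simpa [trace, hU] using congrArg (U ∈ ·) h

theorem trace_eq_of_mem_sInter (hx : (trace 𝒱 x).Finite) (hy : y ∈ ⋂₀ trace 𝒱 x)
    (hle : (trace 𝒱 y).encard ≤ (trace 𝒱 x).encard) : trace 𝒱 y = trace 𝒱 x :=
  (hx.eq_of_subset_of_encard_le ((subset_trace_iff trace_subset).2 hy) hle).symm

theorem trace_preimage_eq (h𝒯 : 𝒯 ⊆ 𝒱) (hk : 𝒯.encard = k) :
    trace 𝒱 ⁻¹' {𝒯} = ⋂₀ 𝒯 \ coveredMoreThan 𝒱 k := by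
  ext x
  simp only [mem_preimage, mem_singleton_iff, Set.mem_sdiff, coveredMoreThan, mem_ofPred_eq,
    not_lt]
  refine ⟨?_, fun ⟨hx, hxk⟩ => ?_⟩
  · rintro rfl
    exact ⟨(subset_trace_iff h𝒯).1 subset_rfl, hk.le⟩
  · have hfin : 𝒯.Finite := finite_of_encard_eq_coe hk
    exact (hfin.eq_of_subset_of_encard_le ((subset_trace_iff h𝒯).2 hx) (hxk.trans hk.ge)).symm

theorem sInter_inter_sInter_subset_coveredMoreThan (h𝒯 : 𝒯 ⊆ 𝒱) (h𝒮 : 𝒮 ⊆ 𝒱)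
    (h𝒯k : 𝒯.encard = k) (h𝒮k : 𝒮.encard = k) (hne : 𝒯 ≠ 𝒮) :
    ⋂₀ 𝒯 ∩ ⋂₀ 𝒮 ⊆ coveredMoreThan 𝒱 k := by
  rintro x ⟨hx𝒯, hx𝒮⟩
  have hfin : 𝒯.Finite := finite_of_encard_eq_coe h𝒯k
  have hssub : 𝒯 ⊂ 𝒯 ∪ 𝒮 := by
    refine ssubset_of_subset_of_ne subset_union_left fun h => hne ?_
    exact ((finite_of_encard_eq_coe h𝒮k).eq_of_subset_of_encard_le
      (h ▸ subset_union_right) (by rw [h𝒯k, h𝒮k])).symm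
  calc (k : ℕ∞) = 𝒯.encard := h𝒯k.symm
    _ < (𝒯 ∪ 𝒮).encard := hfin.encard_lt_encard hssub
    _ ≤ (trace 𝒱 x).encard := encard_le_encard (union_subset
        ((subset_trace_iff h𝒯).2 hx𝒯) ((subset_trace_iff h𝒮).2 hx𝒮))

theorem coveredMoreThan_subset_of_mem_deltaSystem {W : Set K} (hW : W ∈ deltaSystem 𝒱 k) :
    coveredMoreThan 𝒱 k ⊆ W := by
  rcases hW with rfl | ⟨𝒯, -, rfl⟩
  exacts [subset_rfl, subset_union_right]

theorem inter_eq_of_mem_deltaSystem {V W : Set K} (hV : V ∈ deltaSystem 𝒱 k)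
    (hW : W ∈ deltaSystem 𝒱 k) (hVW : V ≠ W) : V ∩ W = coveredMoreThan 𝒱 k := by
  refine (subset_inter (coveredMoreThan_subset_of_mem_deltaSystem hV)
    (coveredMoreThan_subset_of_mem_deltaSystem hW)).antisymm' ?_
  rcases hV with rfl | ⟨𝒯, ⟨h𝒯, h𝒯k⟩, rfl⟩
  · exact inter_subset_left
  rcases hW with rfl | ⟨𝒮, ⟨h𝒮, h𝒮k⟩, rfl⟩
  · exact inter_subset_right
  dsimp only at hVW ⊢
  rw [← inter_union_distrib_right]
  exact union_subset (sInter_inter_sInter_subset_coveredMoreThan h𝒯 h𝒮 h𝒯k h𝒮k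
    fun h => hVW (by rw [h])) subset_rfl

theorem exists_mem_deltaSystem_xor {U : Set K} (hU : U ∈ 𝒱) (hxy : Xor (x ∈ U) (y ∈ U))
    (hx : (trace 𝒱 x).Finite) : ∃ k, ∃ W ∈ deltaSystem 𝒱 k, Xor (x ∈ W) (y ∈ W) := by
  set k := (trace 𝒱 x).ncard
  have hxk : x ∉ coveredMoreThan 𝒱 k := by simp [coveredMoreThan, k, hx.cast_ncard_eq]
  by_cases hyk : y ∈ coveredMoreThan 𝒱 k
  · exact ⟨k, _, mem_insert _ _, Or.inr ⟨hyk, hxk⟩⟩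
  refine ⟨k, ⋂₀ trace 𝒱 x ∪ coveredMoreThan 𝒱 k,
    mem_insert_of_mem _ ⟨_, ⟨trace_subset, hx.cast_ncard_eq.symm⟩, rfl⟩,
    Or.inl ⟨Or.inl ((subset_trace_iff trace_subset).1 subset_rfl), ?_⟩⟩
  rintro (hy | hy)
  · -- otherwise `x` and `y` would have the same trace, which `U` rules out
    have hle : (trace 𝒱 y).encard ≤ (trace 𝒱 x).encard := by
      simpa [coveredMoreThan, k, hx.cast_ncard_eq] using hyk
    exact (xor_iff_not_iff _ _).1 hxy
      (mem_iff_of_trace_eq hU (trace_eq_of_mem_sInter hx hy hle).symm)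
  · exact hyk hy

theorem trace_biUnion_eq_iff {ι : Type*} {𝒰 : ι → Set (Set K)} {s : Finset ι} :
    trace (⋃ n ∈ s, 𝒰 n) x = trace (⋃ n ∈ s, 𝒰 n) y ↔
      ∀ n ∈ s, trace (𝒰 n) x = trace (𝒰 n) y := by
  simp only [trace, Set.ext_iff, mem_ofPred_eq, mem_iUnion, exists_prop]
  grind

section Topology

variable [TopologicalSpace K] (h𝒱 : ∀ U ∈ 𝒱, IsOpen U)
include h𝒱

theorem sInter_mem_nhds (h𝒯 : 𝒯 ⊆ trace 𝒱 x) (hfin : 𝒯.Finite) : ⋂₀ 𝒯 ∈ 𝓝 x :=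
  (sInter_mem hfin).2 fun U hU => (h𝒱 U (h𝒯 hU).1).mem_nhds (h𝒯 hU).2

theorem lowerSemicontinuous_encard_trace : LowerSemicontinuous fun x => (trace 𝒱 x).encard := by
  intro x m hm
  obtain ⟨𝒯, h𝒯, h𝒯m⟩ := exists_subset_encard_eq (Order.add_one_le_of_lt hm)
  have hfin : 𝒯.Finite := encard_ne_top_iff.1 (by simpa [h𝒯m] using ne_top_of_lt hm)
  filter_upwards [sInter_mem_nhds h𝒱 h𝒯 hfin] with y hy
  calc m < m + 1 := (ENat.lt_add_one_iff (ne_top_of_lt hm)).2 le_rfl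
    _ = 𝒯.encard := h𝒯m.symm
    _ ≤ (trace 𝒱 y).encard :=
      encard_le_encard ((subset_trace_iff (h𝒯.trans trace_subset)).2 hy)

theorem isOpen_coveredMoreThan : IsOpen (coveredMoreThan 𝒱 k) :=
  (lowerSemicontinuous_encard_trace h𝒱).isOpen_preimage k

theorem isOpen_of_mem_deltaSystem {W : Set K} (hW : W ∈ deltaSystem 𝒱 k) : IsOpen W := by
  rcases hW with rfl | ⟨𝒯, ⟨h𝒯, h𝒯k⟩, rfl⟩
  · exact isOpen_coveredMoreThan h𝒱
  · exact ((finite_of_encard_eq_coe h𝒯k).isOpen_sInter fun U hU => h𝒱 U (h𝒯 hU)).union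
      (isOpen_coveredMoreThan h𝒱)

variable [MeasurableSpace K] [OpensMeasurableSpace K]

theorem measurableSet_trace_preimage (hfin : 𝒯.Finite) : MeasurableSet (trace 𝒱 ⁻¹' {𝒯}) := by
  by_cases h𝒯 : 𝒯 ⊆ 𝒱
  · rw [trace_preimage_eq h𝒯 hfin.cast_ncard_eq.symm]
    exact (hfin.isOpen_sInter fun U hU => h𝒱 U (h𝒯 hU)).measurableSet.diff
      (isOpen_coveredMoreThan h𝒱).measurableSet
  · convert MeasurableSet.empty
    exact eq_empty_of_forall_notMem fun x hx => h𝒯 (hx ▸ trace_subset)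

theorem measure_trace_preimage_eq {μ ν : Measure K} [IsFiniteMeasure μ] [IsFiniteMeasure ν]
    (h : ∀ k, ∀ W ∈ deltaSystem 𝒱 k, μ W = ν W) (hfin : 𝒯.Finite) :
    μ (trace 𝒱 ⁻¹' {𝒯}) = ν (trace 𝒱 ⁻¹' {𝒯}) := by
  by_cases h𝒯 : 𝒯 ⊆ 𝒱
  · have hk := hfin.cast_ncard_eq.symm
    have hR := (isOpen_coveredMoreThan h𝒱 (k := 𝒯.ncard)).measurableSet
    rw [trace_preimage_eq h𝒯 hk, ← union_sdiff_right,
      measure_sdiff subset_union_right hR.nullMeasurableSet (measure_ne_top _ _),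
      measure_sdiff subset_union_right hR.nullMeasurableSet (measure_ne_top _ _),
      h _ _ (mem_insert _ _), h _ _ (mem_insert_of_mem _ ⟨𝒯, ⟨h𝒯, hk⟩, rfl⟩)]
  · have : trace 𝒱 ⁻¹' {𝒯} = ∅ :=
      eq_empty_of_forall_notMem fun x hx => h𝒯 (hx ▸ trace_subset)
    rw [this, measure_empty, measure_empty]

theorem countable_setOf_measure_trace_preimage_pos (ρ : Measure K) [IsFiniteMeasure ρ] :
    {H : Finset (Set K) | 0 < ρ (trace 𝒱 ⁻¹' {↑H})}.Countable :=
  Measure.countable_meas_pos_of_disjoint_iUnion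
    (fun H => measurableSet_trace_preimage h𝒱 H.finite_toSet)
    fun _ _ hne => Disjoint.preimage _ (disjoint_singleton.2 (Finset.coe_injective.ne hne))

theorem measure_setOf_trace_finite_null (ρ : Measure K) [IsFiniteMeasure ρ] [ρ.InnerRegular] :
    ρ {x | (trace 𝒱 x).Finite ∧ ρ (trace 𝒱 ⁻¹' {trace 𝒱 x}) = 0} = 0 := by
  set P := {H : Finset (Set K) | 0 < ρ (trace 𝒱 ⁻¹' {↑H})}
  set Z := ⋃ H ∈ P, trace 𝒱 ⁻¹' {(H : Set (Set K))}
  have hZ : MeasurableSet Z := MeasurableSet.biUnion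
    (countable_setOf_measure_trace_preimage_pos h𝒱 ρ) fun H _ =>
      measurableSet_trace_preimage h𝒱 H.finite_toSet
  have hmemZ : ∀ x, (trace 𝒱 x).Finite → (x ∈ Z ↔ 0 < ρ (trace 𝒱 ⁻¹' {trace 𝒱 x})) := by
    intro x hx
    simp only [Z, P, mem_iUnion, mem_preimage, mem_singleton_iff, mem_ofPred_eq, exists_prop]
    exact ⟨fun ⟨H, hH, hxH⟩ => hxH ▸ hH, fun h => ⟨hx.toFinset, by simpa using h, by simp⟩⟩
  -- on the points of trace size exactly `k`, each fiber is relatively open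
  have hk : ∀ k : ℕ, ρ ({x | (trace 𝒱 x).encard = k} \ Z) = 0 := by
    intro k
    refine Measure.InnerRegular.measure_eq_zero_of_forall_nhdsWithin
      (((lowerSemicontinuous_encard_trace h𝒱).measurable_enat (measurableSet_singleton _)).diff hZ)
      fun x ⟨hxk, hxZ⟩ => ⟨trace 𝒱 ⁻¹' {trace 𝒱 x}, ?_, ?_⟩
    · have hx : (trace 𝒱 x).Finite := finite_of_encard_eq_coe hxk
      refine mem_nhdsWithin_iff_exists_mem_nhds_inter.2
        ⟨_, sInter_mem_nhds h𝒱 subset_rfl hx, fun y ⟨hy, hyk, _⟩ => ?_⟩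
      exact trace_eq_of_mem_sInter hx hy (hyk.trans hxk.symm).le
    · by_contra h0
      exact hxZ ((hmemZ x (finite_of_encard_eq_coe hxk)).2 (pos_iff_ne_zero.2 h0))
  refine measure_mono_null (fun x ⟨hx, hx0⟩ => ?_) (measure_iUnion_null hk)
  exact mem_iUnion.2 ⟨(trace 𝒱 x).ncard, hx.cast_ncard_eq.symm,
    fun hxZ => ((hmemZ x hx).1 hxZ).ne' hx0⟩

end Topology

section Levels

variable [TopologicalSpace K] {𝒰 : ℕ → Set (Set K)} (h𝒰 : ∀ n, ∀ U ∈ 𝒰 n, IsOpen U)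
include h𝒰

theorem isOpen_of_mem_biUnion (s : Finset ℕ) : ∀ U ∈ ⋃ n ∈ s, 𝒰 n, IsOpen U := fun U hU => by
  obtain ⟨n, -, hU⟩ := mem_iUnion₂.1 hU
  exact h𝒰 n U hU

variable [MeasurableSpace K] [OpensMeasurableSpace K] {μ ν : Measure K} [IsFiniteMeasure μ]
  [IsFiniteMeasure ν]

theorem measure_biInter_trace_preimage_eq
    (h : ∀ (s : Finset ℕ) (k : ℕ), ∀ W ∈ deltaSystem (⋃ n ∈ s, 𝒰 n) k, μ W = ν W)
    {α : Type*} (t : Finset α) (n : α → ℕ) (𝒯 : α → Set (Set K)) (h𝒯 : ∀ a ∈ t, (𝒯 a).Finite) :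
    μ (⋂ a ∈ t, trace (𝒰 (n a)) ⁻¹' {𝒯 a}) = ν (⋂ a ∈ t, trace (𝒰 (n a)) ⁻¹' {𝒯 a}) := by
  classical
  rcases eq_empty_or_nonempty (⋂ a ∈ t, trace (𝒰 (n a)) ⁻¹' {𝒯 a}) with hE | ⟨x₀, hx₀⟩
  · rw [hE, measure_empty, measure_empty]
  simp only [mem_iInter, mem_preimage, mem_singleton_iff] at hx₀
  set 𝒱 := ⋃ m ∈ t.image n, 𝒰 m
  have hE : ⋂ a ∈ t, trace (𝒰 (n a)) ⁻¹' {𝒯 a} = trace 𝒱 ⁻¹' {trace 𝒱 x₀} := by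
    ext x
    simp only [mem_iInter, mem_preimage, mem_singleton_iff, 𝒱, trace_biUnion_eq_iff,
      Finset.forall_mem_image]
    exact forall₂_congr fun a ha => by rw [hx₀ a ha]
  have hfin : (trace 𝒱 x₀).Finite := by
    refine (t.finite_toSet.biUnion h𝒯).subset fun U ⟨hU, hx₀U⟩ => ?_
    obtain ⟨m, hm, hUm⟩ := mem_iUnion₂.1 hU
    obtain ⟨a, ha, rfl⟩ := Finset.mem_image.1 hm
    exact mem_iUnion₂.2 ⟨a, ha, hx₀ a ha ▸ ⟨hUm, hx₀U⟩⟩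
  rw [hE]
  exact measure_trace_preimage_eq (isOpen_of_mem_biUnion h𝒰 _) (h _) hfin

theorem ext_of_forall_deltaSystem [T2Space K] [μ.InnerRegular] [ν.InnerRegular]
    (hsep : ∀ x y : K, x ≠ y → ∃ n, (∃ U ∈ 𝒰 n, Xor (x ∈ U) (y ∈ U)) ∧
      ((trace (𝒰 n) x).Finite ∨ (trace (𝒰 n) y).Finite))
    (h : ∀ (s : Finset ℕ) (k : ℕ), ∀ W ∈ deltaSystem (⋃ n ∈ s, 𝒰 n) k, μ W = ν W) : μ = ν := by
  set ρ := μ + ν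
  set ι := {p : ℕ × Finset (Set K) | 0 < ρ (trace (𝒰 p.1) ⁻¹' {↑p.2})}
  have hι : ι.Countable := (countable_iUnion fun n => (countable_singleton n).prod
    (countable_setOf_measure_trace_preimage_pos (h𝒰 n) ρ)).mono fun p hp =>
      mem_iUnion.2 ⟨p.1, mem_prod.2 ⟨rfl, hp⟩⟩
  have := hι.to_subtype
  set N := ⋃ n, {x | (trace (𝒰 n) x).Finite ∧ ρ (trace (𝒰 n) ⁻¹' {trace (𝒰 n) x}) = 0}
  have hN : ρ N = 0 := measure_iUnion_null fun n => measure_setOf_trace_finite_null (h𝒰 n) ρ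
  refine Measure.ext_of_measure_biInter_eq_of_separating
    (S := fun p : ι => trace (𝒰 p.1.1) ⁻¹' {↑p.1.2})
    (fun p => measurableSet_trace_preimage (h𝒰 _) p.1.2.finite_toSet)
    (fun t => measure_biInter_trace_preimage_eq h𝒰 h t (fun p => p.1.1) (fun p => ↑p.1.2)
      fun p _ => p.1.2.finite_toSet)
    (add_eq_zero.1 hN).1 (add_eq_zero.1 hN).2 fun x hxN y hyN hxy => ?_
  by_contra hne
  obtain ⟨n, ⟨U, hU, hxor⟩, hfin⟩ := hsep x y hne
  have key : ∀ {x y : K}, x ∉ N → (trace (𝒰 n) x).Finite →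
      (∀ p : ι, x ∈ trace (𝒰 p.1.1) ⁻¹' {↑p.1.2} ↔ y ∈ trace (𝒰 p.1.1) ⁻¹' {↑p.1.2}) →
      trace (𝒰 n) x = trace (𝒰 n) y := by
    intro x y hxN hx hxy
    have hpos : 0 < ρ (trace (𝒰 n) ⁻¹' {trace (𝒰 n) x}) :=
      pos_iff_ne_zero.2 fun h0 => hxN (mem_iUnion.2 ⟨n, hx, h0⟩)
    simpa using ((hxy ⟨(n, hx.toFinset), by simpa [ι] using hpos⟩).1 (by simp)).symm
  have htr := hfin.elim (fun hx => key hxN hx hxy)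
    fun hy => (key hyN hy fun p => (hxy p).symm).symm
  exact (xor_iff_not_iff _ _).1 hxor (mem_iff_of_trace_eq hU htr)

end Levels

end Gruenhage

open Gruenhage

theorem gruenhage_measure_determining_families_general
    {K : Type*} [TopologicalSpace K] [T2Space K]
    [MeasurableSpace K] [BorelSpace K]
    (h : IsGruenhage K) :
    ∃ (R : ℕ → Set K) (𝒰 : ℕ → Set (Set K)),
      (∀ n, IsOpen (R n)) ∧
      (∀ n, ∀ U ∈ 𝒰 n, IsOpen U) ∧
      (∀ n, ∀ U ∈ 𝒰 n, R n ⊆ U) ∧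
      (∀ n, ∀ U ∈ 𝒰 n, ∀ V ∈ 𝒰 n, U ≠ V → U ∩ V = R n) ∧
      (∀ x y : K, x ≠ y → ∃ n, ∃ U ∈ 𝒰 n, Xor' (x ∈ U) (y ∈ U)) ∧
      (∀ μ ν : Measure K, IsFiniteMeasure μ → IsFiniteMeasure ν →
        μ.InnerRegular → ν.InnerRegular →
        μ Set.univ = ν Set.univ → (∀ n, ∀ U ∈ 𝒰 n, μ U = ν U) → μ = ν) := by
  obtain ⟨𝒰, h𝒰, hsep⟩ := h
  have h𝒱 := isOpen_of_mem_biUnion h𝒰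
  -- the Δ-systems are indexed by the pairs `(s, k)` of a finite set of levels and a size
  let e : ℕ ≃ Finset ℕ × ℕ := (Denumerable.eqv _).symm
  refine ⟨fun m => coveredMoreThan (⋃ n ∈ (e m).1, 𝒰 n) (e m).2,
    fun m => deltaSystem (⋃ n ∈ (e m).1, 𝒰 n) (e m).2,
    fun m => isOpen_coveredMoreThan (h𝒱 _), fun m _ => isOpen_of_mem_deltaSystem (h𝒱 _),
    fun m _ => coveredMoreThan_subset_of_mem_deltaSystem,
    fun m _ hU _ hV => inter_eq_of_mem_deltaSystem hU hV, fun x y hxy => ?_,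
    fun μ ν _ _ _ _ _ hμν => ext_of_forall_deltaSystem h𝒰 hsep fun s k W hW =>
      hμν (e.symm (s, k)) W (by simpa using hW)⟩
  obtain ⟨n, ⟨U, hU, hxy⟩, hfin⟩ := hsep x y hxy
  obtain ⟨k, W, hW, hW'⟩ : ∃ k, ∃ W ∈ deltaSystem (𝒰 n) k, Xor (x ∈ W) (y ∈ W) :=
    hfin.elim (exists_mem_deltaSystem_xor hU hxy) fun hy =>
      (exists_mem_deltaSystem_xor hU hxy.symm hy).imp fun _ ⟨W, hW, h⟩ => ⟨W, hW, h.symm⟩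
  exact ⟨e.symm ({n}, k), W, by simpa using hW, hW'⟩

/-- On a Gruenhage compact Hausdorff space, there is a separating system of open sets
`Rₙ`, `𝒰ₙ` as in Proposition `gruenhage_equiv (iii)` which moreover determines finite
Radon measures: two finite inner-regular Borel measures with the same total mass agreeing
on each `U ∈ ⋃ₙ 𝒰ₙ` are equal. -/
theorem gruenhage_measure_determining_families
    {K : Type*} [TopologicalSpace K] [CompactSpace K] [T2Space K]
    [MeasurableSpace K] [BorelSpace K]
    (h : IsGruenhage K) :
    ∃ (R : ℕ → Set K) (𝒰 : ℕ → Set (Set K)),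
      (∀ n, IsOpen (R n)) ∧
      (∀ n, ∀ U ∈ 𝒰 n, IsOpen U) ∧
      (∀ n, ∀ U ∈ 𝒰 n, R n ⊆ U) ∧
      (∀ n, ∀ U ∈ 𝒰 n, ∀ V ∈ 𝒰 n, U ≠ V → U ∩ V = R n) ∧
      (∀ x y : K, x ≠ y → ∃ n, ∃ U ∈ 𝒰 n, Xor' (x ∈ U) (y ∈ U)) ∧
      (∀ μ ν : Measure K, IsFiniteMeasure μ → IsFiniteMeasure ν →
        μ.InnerRegular → ν.InnerRegular →
        μ Set.univ = ν Set.univ → (∀ n, ∀ U ∈ 𝒰 n, μ U = ν U) → μ = ν) :=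
  gruenhage_measure_determining_families_general h
end

section
/- Let X be a real Banach space such that there exists an equivalent norm on X whose dual norm on X* is strictly convex. Then X* equipped with the weak-* topology has property (*): there exist families 𝒰_q of weak-* open subsets of X* indexed by a countable set, such that for all distinct f, g ∈ X* there exists an index q with (i) at least one of f, g belonging to ⋃𝒰_q, and (ii) every U ∈ 𝒰_q containing at most one of f and g. -/
open NormedSpace

/-- A topological space has *property (*)* if there is a sequence `(𝒰 n)` of families of
open sets such that for all distinct `x, y` there is `n` with (i) at least one of `x, y`
in `⋃₀ 𝒰 n`, and (ii) no `U ∈ 𝒰 n` containing both `x` and `y`. -/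
def HasPropertyStar (X : Type*) [TopologicalSpace X] : Prop :=
  ∃ 𝒰 : ℕ → Set (Set X),
    (∀ n, ∀ U ∈ 𝒰 n, IsOpen U) ∧
    ∀ x y : X, x ≠ y →
      ∃ n, (x ∈ ⋃₀ 𝒰 n ∨ y ∈ ⋃₀ 𝒰 n) ∧ ∀ U ∈ 𝒰 n, ¬(x ∈ U ∧ y ∈ U)

/-- The dual norm on `X*` induced by a norm `p` on `X`: `N(f) = sup { f x : p x ≤ 1 }`. -/
noncomputable def dualNormOf {X : Type*} [NormedAddCommGroup X] [NormedSpace ℝ X]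
    (p : X → ℝ) (f : StrongDual ℝ X) : ℝ :=
  ⨆ x : {x : X // p x ≤ 1}, f x

/-- `p` is a norm on `X` equivalent to the given norm. -/
def IsEquivNormOn (X : Type*) [NormedAddCommGroup X] [NormedSpace ℝ X] (p : X → ℝ) : Prop :=
  (∀ x y : X, p (x + y) ≤ p x + p y) ∧
  (∀ (c : ℝ) (x : X), p (c • x) = |c| * p x) ∧
  ∃ a b : ℝ, 0 < a ∧ 0 < b ∧ ∀ x : X, a * ‖x‖ ≤ p x ∧ p x ≤ b * ‖x‖

/-- `X*` admits an equivalent strictly convex dual norm. -/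
def HasEquivStrictlyConvexDualNorm (X : Type*) [NormedAddCommGroup X] [NormedSpace ℝ X] :
    Prop :=
  ∃ p : X → ℝ, IsEquivNormOn X p ∧
    ∀ f g : StrongDual ℝ X,
      dualNormOf p f = dualNormOf p g →
      dualNormOf p f = dualNormOf p ((2⁻¹ : ℝ) • (f + g)) →
      f = g

/-!
Write `N` for the strictly convex dual norm. Each superlevel set `{N > q}` is a union of
weak-* open half-spaces `{h | q < h x}` with `p x ≤ 1`, hence weak-* open. Functionals of
different norms are separated by some `{N > q}` with `q ∈ ℚ`. If `N f = N g` and `f ≠ g`, strict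
convexity puts their midpoint `m` in a ball `{N ≤ q}` with `q < N f` rational; the open convex
sets missing that ball cover `f`, and none of them contains both `f` and `g`, since it would
contain `m`.
-/

theorem HasPropertyStar.of_countable {Y ι : Type*} [TopologicalSpace Y] [Countable ι]
    [Nonempty ι] (𝒰 : ι → Set (Set Y)) (hopen : ∀ i, ∀ U ∈ 𝒰 i, IsOpen U)
    (hsep : ∀ x y : Y, x ≠ y →
      ∃ i, (x ∈ ⋃₀ 𝒰 i ∨ y ∈ ⋃₀ 𝒰 i) ∧ ∀ U ∈ 𝒰 i, ¬(x ∈ U ∧ y ∈ U)) :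
    HasPropertyStar Y := by
  obtain ⟨e, he⟩ := exists_surjective_nat ι
  refine ⟨𝒰 ∘ e, fun n => hopen (e n), fun x y hxy => ?_⟩
  obtain ⟨i, hi⟩ := hsep x y hxy
  obtain ⟨n, rfl⟩ := he i
  exact ⟨n, hi⟩

theorem HasPropertyStar.of_strictlyConvex {E : Type*} [AddCommGroup E] [Module ℝ E]
    [TopologicalSpace E] (N : E → ℝ)
    (hcover : ∀ (q : ℝ) (f : E), q < N f →
      ∃ U : Set E, IsOpen U ∧ Convex ℝ U ∧ f ∈ U ∧ ∀ g ∈ U, q < N g)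
    (hmid : ∀ f g : E, f ≠ g → N f = N g → N (midpoint ℝ f g) < N f) :
    HasPropertyStar E := by
  have hopen (q : ℝ) : IsOpen {f | q < N f} := isOpen_iff_forall_mem_open.2 fun f hf => by
    obtain ⟨U, hU, -, hfU, hUN⟩ := hcover q f hf
    exact ⟨U, hUN, hU, hfU⟩
  let 𝒰 : ℚ ⊕ ℚ → Set (Set E) := Sum.elim (fun q => {{f | (q : ℝ) < N f}})
    fun q => {U | IsOpen U ∧ Convex ℝ U ∧ ∀ g ∈ U, (q : ℝ) < N g}
  refine HasPropertyStar.of_countable 𝒰 ?_ fun f g hfg => ?_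
  · rintro (q | q) U hU
    · exact (Set.mem_singleton_iff.1 hU) ▸ hopen q
    · exact hU.1
  wlog hle : N f ≤ N g generalizing f g
  · obtain ⟨i, hmem, hsep⟩ := this g f hfg.symm (le_of_not_ge hle)
    exact ⟨i, hmem.symm, fun U hU => by simpa only [and_comm] using hsep U hU⟩
  rcases hle.lt_or_eq with hlt | heq
  · obtain ⟨q, hfq, hqg⟩ := exists_rat_btwn hlt
    refine ⟨.inl q, .inr ⟨_, rfl, hqg⟩, ?_⟩
    rintro U rfl ⟨hqf, -⟩
    exact hqf.not_gt hfq
  · obtain ⟨q, hmq, hqf⟩ := exists_rat_btwn (hmid f g hfg heq)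
    obtain ⟨U, hU, hUc, hfU, hUN⟩ := hcover q f hqf
    refine ⟨.inr q, .inl ⟨U, ⟨hU, hUc, hUN⟩, hfU⟩, ?_⟩
    rintro V ⟨-, hVc, hVN⟩ ⟨hfV, hgV⟩
    exact (hVN _ (hVc.midpoint_mem hfV hgV)).not_gt hmq

namespace IsEquivNormOn

variable {X : Type*} [NormedAddCommGroup X] [NormedSpace ℝ X] {p : X → ℝ}

theorem nonempty_unitBall (hp : IsEquivNormOn X p) : Nonempty {x : X // p x ≤ 1} :=
  ⟨⟨0, by simpa using (hp.2.1 0 0).trans_le (by simp)⟩⟩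

theorem bddAbove_range_apply (hp : IsEquivNormOn X p) (f : StrongDual ℝ X) :
    BddAbove (Set.range fun x : {x : X // p x ≤ 1} => f x) := by
  obtain ⟨a, _, ha, _, hab⟩ := hp.2.2
  refine ⟨‖f‖ * a⁻¹, ?_⟩
  rintro _ ⟨⟨x, hx⟩, rfl⟩
  have hx' : ‖x‖ ≤ a⁻¹ := by
    simpa using (le_inv_mul_iff₀ ha).2 ((hab x).1.trans hx)
  calc f x ≤ ‖f x‖ := le_abs_self _
    _ ≤ ‖f‖ * ‖x‖ := f.le_opNorm x
    _ ≤ ‖f‖ * a⁻¹ := by gcongr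

theorem apply_le_dualNormOf (hp : IsEquivNormOn X p) (f : StrongDual ℝ X) {x : X}
    (hx : p x ≤ 1) : f x ≤ dualNormOf p f :=
  le_ciSup (hp.bddAbove_range_apply f) ⟨x, hx⟩

theorem exists_lt_apply_of_lt_dualNormOf (hp : IsEquivNormOn X p) {f : StrongDual ℝ X}
    {q : ℝ} (hq : q < dualNormOf p f) : ∃ x, p x ≤ 1 ∧ q < f x := by
  have := hp.nonempty_unitBall
  obtain ⟨⟨x, hx⟩, hqx⟩ := exists_lt_of_lt_ciSup hq
  exact ⟨x, hx, hqx⟩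

theorem dualNormOf_midpoint_le (hp : IsEquivNormOn X p) (f g : StrongDual ℝ X) :
    dualNormOf p (midpoint ℝ f g) ≤ midpoint ℝ (dualNormOf p f) (dualNormOf p g) := by
  have := hp.nonempty_unitBall
  refine ciSup_le fun ⟨x, hx⟩ => ?_
  have hf := hp.apply_le_dualNormOf f hx
  have hg := hp.apply_le_dualNormOf g hx
  rw [midpoint_eq_smul_add, midpoint_eq_smul_add, invOf_eq_inv]
  change 2⁻¹ * (f x + g x) ≤ 2⁻¹ * (dualNormOf p f + dualNormOf p g)
  linarith

end IsEquivNormOn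

theorem WeakDual.isOpen_setOf_lt_apply {X : Type*} [NormedAddCommGroup X] [NormedSpace ℝ X]
    (r : ℝ) (x : X) : IsOpen {h : WeakDual ℝ X | r < h x} :=
  isOpen_lt continuous_const (WeakDual.eval_continuous x)

theorem WeakDual.convex_setOf_lt_apply {X : Type*} [NormedAddCommGroup X] [NormedSpace ℝ X]
    (r : ℝ) (x : X) : Convex ℝ {h : WeakDual ℝ X | r < h x} :=
  convex_halfSpace_gt ⟨fun _ _ => rfl, fun _ _ => rfl⟩ r

theorem strictlyConvex_dualNorm_hasPropertyStar_general
    {X : Type*} [NormedAddCommGroup X] [NormedSpace ℝ X]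
    (h : HasEquivStrictlyConvexDualNorm X) :
    HasPropertyStar (WeakDual ℝ X) := by
  obtain ⟨p, hp, hstrict⟩ := h
  have hmid (f g : StrongDual ℝ X) (hfg : f ≠ g) (heq : dualNormOf p f = dualNormOf p g) :
      dualNormOf p (midpoint ℝ f g) < dualNormOf p f := by
    refine ((hp.dualNormOf_midpoint_le f g).trans_eq ?_).lt_of_ne fun hN =>
      hfg (hstrict f g heq ?_)
    · rw [heq, midpoint_self]
    · rw [← hN, midpoint_eq_smul_add, invOf_eq_inv]
  refine HasPropertyStar.of_strictlyConvex (E := WeakDual ℝ X) (dualNormOf p)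
    (fun q f hqf => ?_) hmid
  obtain ⟨x, hx, hqx⟩ := hp.exists_lt_apply_of_lt_dualNormOf hqf
  exact ⟨_, WeakDual.isOpen_setOf_lt_apply q x, WeakDual.convex_setOf_lt_apply q x, hqx,
    fun g hg => hg.trans_le (hp.apply_le_dualNormOf g hx)⟩

/-- If `X*` admits an equivalent strictly convex dual norm, then `X*` with the weak-*
topology has property (*). -/
theorem strictlyConvex_dualNorm_hasPropertyStar
    {X : Type*} [NormedAddCommGroup X] [NormedSpace ℝ X] [CompleteSpace X]
    (h : HasEquivStrictlyConvexDualNorm X) :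
    HasPropertyStar (WeakDual ℝ X) :=
  strictlyConvex_dualNorm_hasPropertyStar_general h
end
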